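/- arXiv:2407.12098 — 4 statements merged into one kernel-verified Lean document; each statement's English description precedes it below -/
import Mathlib

section
/- Let s = 1/2 and p = τ = 2 (so sp = 1 and γ = -1/2). There is no measurable function f : (0,1) → [0,∞) with lim_{x→0+} f(x) = ∞ such that for some constant C > 0 the improved inequality (∫_0^1 f(x)^2 δ_x^{-1} |u(x) - (u)_{(0,1)}|^2 / (log(2/δ_x))^2 dx)^{1/2} ≤ C [u]_{1/2,2,(0,1)} holds for all u ∈ W^{1/2,2}((0,1)). Equivalently, the weight δ_x^{-1/2}/log(2/δ_x) in the boundary fractional Hardy inequality on (0,1) is sharp: it cannot be multiplied by any function tending to infinity as x → 0+ (nor, by symmetry, as x → 1-). -/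
open MeasureTheory Set Filter Topology intervalIntegral

/-- The Gagliardo seminorm `[u]_{s,p,Ω}` of `u` over a set `Ω ⊆ ℝ`. -/
noncomputable def gagliardoS (s p : ℝ) (Ω : Set ℝ) (u : ℝ → ℝ) : ℝ :=
  (∫ x in Ω, ∫ y in Ω, |u x - u y| ^ p / |x - y| ^ (1 + s * p)) ^ (1 / p)

/-- The average `(u)_ω` of `u` over a set `ω ⊆ ℝ`. -/
noncomputable def avgS (ω : Set ℝ) (u : ℝ → ℝ) : ℝ :=
  ((volume ω).toReal)⁻¹ * ∫ x in ω, u x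

noncomputable def vv (e x : ℝ) : ℝ := min 1 (Real.log (2 / x) / Real.log (2 / e))

noncomputable def BB (e x y : ℝ) : ℝ :=
  16 / Real.log (2/e) ^ 2 * (max (min x y) e) ^ (-(1/2) : ℝ) * (max (max x y) e) ^ (-(3/2) : ℝ)

-- basic consequences of smallness of e
lemma e_facts {e : ℝ} (he0 : 0 < e) (he : e ≤ 2 * Real.exp (-24)) :
    e < 1 ∧ 24 ≤ Real.log (2 / e) ∧ e ≤ 1/2 := by
  have h2e' : Real.exp 24 * e ≤ 2 := by
    calc Real.exp 24 * e ≤ Real.exp 24 * (2 * Real.exp (-24)) := by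
          exact mul_le_mul_of_nonneg_left he (Real.exp_pos _).le
      _ = 2 := by rw [← mul_assoc, mul_comm (Real.exp 24) 2, mul_assoc, ← Real.exp_add]; simp
  have h25 : (25:ℝ) ≤ Real.exp 24 := by
    have := Real.add_one_le_exp (24:ℝ); linarith
  have heH : e ≤ 1/2 := by nlinarith
  have h2e : Real.exp 24 ≤ 2 / e := by rw [le_div_iff₀ he0]; exact h2e'
  have h24 : 24 ≤ Real.log (2 / e) := by
    calc (24:ℝ) = Real.log (Real.exp 24) := (Real.log_exp _).symm
      _ ≤ Real.log (2 / e) := Real.log_le_log (Real.exp_pos _) h2e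
  exact ⟨by linarith, h24, heH⟩

lemma vv_rep {e x : ℝ} (he0 : 0 < e) (he1 : e < 1) (hx : x ∈ Ioo (0:ℝ) 1) :
    vv e x = Real.log (2 / max x e) / Real.log (2 / e) := by
  obtain ⟨hx0, hx1⟩ := hx
  have hLpos : 0 < Real.log (2 / e) := by
    apply Real.log_pos; rw [lt_div_iff₀ he0]; linarith
  rcases le_total e x with h | h
  · rw [max_eq_left h]
    have : Real.log (2 / x) ≤ Real.log (2 / e) := by
      apply Real.log_le_log (by positivity)
      apply div_le_div_of_nonneg_left (by norm_num) he0 h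
    rw [vv, min_eq_right]
    exact (div_le_one hLpos).mpr this
  · rw [max_eq_right h]
    have : Real.log (2 / e) ≤ Real.log (2 / x) := by
      apply Real.log_le_log (by positivity)
      apply div_le_div_of_nonneg_left (by norm_num) hx0 h
    rw [vv, min_eq_left, div_self hLpos.ne']
    exact (le_div_iff₀ hLpos).mpr (by linarith)

lemma vv_mem {e x : ℝ} (he0 : 0 < e) (he1 : e < 1) (hx : x ∈ Ioo (0:ℝ) 1) :
    vv e x ∈ Icc (0:ℝ) 1 := by
  obtain ⟨hx0, hx1⟩ := hx
  have hLpos : 0 < Real.log (2 / e) := by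
    apply Real.log_pos; rw [lt_div_iff₀ he0]; linarith
  constructor
  · rw [vv]; simp only [le_min_iff]
    refine ⟨by norm_num, ?_⟩
    apply div_nonneg _ hLpos.le
    apply Real.log_nonneg; rw [le_div_iff₀ hx0]; linarith
  · exact min_le_left _ _

lemma vv_one {e x : ℝ} (he0 : 0 < e) (he1 : e < 1) (hx : x ∈ Ioo (0:ℝ) 1) (hxe : x ≤ e) :
    vv e x = 1 := by
  rw [vv_rep he0 he1 hx, max_eq_right hxe, div_self]
  have : 0 < Real.log (2 / e) := by
    apply Real.log_pos; rw [lt_div_iff₀ he0]; linarith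
  exact this.ne'

-- key algebraic estimate
lemma key_alg {a b : ℝ} (ha : 0 < a) (hab : a < b) :
    (Real.log (b / a)) ^ 2 / (b - a) ^ 2 ≤ 16 * a ^ (-(1/2) : ℝ) * b ^ (-(3/2) : ℝ) := by
  have hb : 0 < b := ha.trans hab
  set s := a ^ ((1:ℝ)/4) with hs_def
  set t := b ^ ((1:ℝ)/4) with ht_def
  have hs : 0 < s := Real.rpow_pos_of_pos ha _
  have ht : 0 < t := Real.rpow_pos_of_pos hb _
  have hst : s < t := Real.rpow_lt_rpow ha.le hab (by norm_num)
  have hs4 : s ^ (4:ℕ) = a := by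
    rw [hs_def, ← Real.rpow_natCast (a ^ ((1:ℝ)/4)) 4, ← Real.rpow_mul ha.le]; norm_num
  have ht4 : t ^ (4:ℕ) = b := by
    rw [ht_def, ← Real.rpow_natCast (b ^ ((1:ℝ)/4)) 4, ← Real.rpow_mul hb.le]; norm_num
  have hlog : Real.log (b / a) = 4 * (Real.log t - Real.log s) := by
    rw [Real.log_div hb.ne' ha.ne', hs_def, ht_def, Real.log_rpow ha, Real.log_rpow hb]; ring
  have hlog_le : Real.log (b / a) ≤ 4 * (t - s) / s := by
    rw [hlog]
    have h1 : Real.log t - Real.log s = Real.log (t / s) := (Real.log_div ht.ne' hs.ne').symm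
    have h2 : Real.log (t / s) ≤ t / s - 1 := Real.log_le_sub_one_of_pos (by positivity)
    rw [h1]
    have : t / s - 1 = (t - s) / s := by field_simp
    rw [this] at h2
    rw [mul_div_assoc]
    linarith [mul_le_mul_of_nonneg_left h2 (by norm_num : (0:ℝ) ≤ 4)]
  have hlog_nn : 0 ≤ Real.log (b / a) := by
    apply Real.log_nonneg; rw [le_div_iff₀ ha]; linarith
  have hba : b - a ≥ (t - s) * t ^ (3:ℕ) := by
    rw [← hs4, ← ht4]
    have h3 : s ^ (3:ℕ) ≤ t ^ (3:ℕ) := pow_le_pow_left₀ hs.le hst.le 3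
    nlinarith [hs.le, ht.le, hst.le, mul_nonneg hs.le (sub_nonneg.mpr h3)]
  have hts : 0 < t - s := by linarith
  -- goal in terms of s t
  have hgoal : 16 * a ^ (-(1/2):ℝ) * b ^ (-(3/2):ℝ) = 16 / (s ^ (2:ℕ) * t ^ (6:ℕ)) := by
    have h1 : a ^ (-(1/2):ℝ) = (s ^ (2:ℕ))⁻¹ := by
      rw [hs_def, ← Real.rpow_natCast (a ^ ((1:ℝ)/4)) 2, ← Real.rpow_mul ha.le,
        ← Real.rpow_neg ha.le]; norm_num
    have h2 : b ^ (-(3/2):ℝ) = (t ^ (6:ℕ))⁻¹ := by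
      rw [ht_def, ← Real.rpow_natCast (b ^ ((1:ℝ)/4)) 6, ← Real.rpow_mul hb.le,
        ← Real.rpow_neg hb.le]; norm_num
    rw [h1, h2]; field_simp
  rw [hgoal, div_le_div_iff₀ (pow_pos (by linarith : (0:ℝ) < b - a) 2) (by positivity)]
  have hsq : (Real.log (b/a)) ^ 2 ≤ (4 * (t-s) / s) ^ 2 := by
    apply sq_le_sq' _ hlog_le; linarith [hlog_nn, hlog_le]
  have hbasq : (b - a) ^ 2 ≥ ((t - s) * t ^ (3:ℕ)) ^ 2 := by
    apply sq_le_sq' _ hba; nlinarith [hts, ht]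
  calc Real.log (b / a) ^ 2 * (s ^ (2:ℕ) * t ^ (6:ℕ))
      ≤ (4 * (t-s) / s) ^ 2 * (s ^ (2:ℕ) * t ^ (6:ℕ)) := by
        apply mul_le_mul_of_nonneg_right hsq (by positivity)
    _ = 16 * ((t - s) * t ^ (3:ℕ)) ^ 2 := by field_simp; ring
    _ ≤ 16 * (b - a) ^ 2 := by linarith

-- generic boundedness => integrability on finite-measure set
lemma integrableOn_of_bounded' {f : ℝ → ℝ} {s : Set ℝ} (hs : MeasurableSet s)
    (hvol : volume s < ⊤) (hm : Measurable f) {K : ℝ} (hb : ∀ x ∈ s, |f x| ≤ K) :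
    IntegrableOn f s := by
  apply Integrable.mono' (g := fun _ => K) (integrableOn_const hvol.ne)
    hm.aestronglyMeasurable
  rw [ae_restrict_iff' hs]
  exact Eventually.of_forall fun x hx => hb x hx

lemma int_rpow_half {x : ℝ} (hx : 0 ≤ x) :
    ∫ y in Ioc (0:ℝ) x, y ^ (-(1/2) : ℝ) = 2 * x ^ ((1/2) : ℝ) := by
  rw [← intervalIntegral.integral_of_le hx, integral_rpow (Or.inl (by norm_num))]
  rw [Real.zero_rpow (by norm_num)]
  norm_num
  ring

lemma int_rpow_threehalf {A : ℝ} (hA : 0 < A) (hA1 : A ≤ 1) :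
    ∫ y in Ioo A (1:ℝ), y ^ (-(3/2) : ℝ) = 2 * (A ^ (-(1/2) : ℝ) - 1) := by
  rw [← integral_Ioc_eq_integral_Ioo, ← intervalIntegral.integral_of_le hA1,
    integral_rpow (Or.inr ⟨by norm_num, by
      simp only [Set.mem_uIcc]; push_neg
      constructor <;> intro h <;> nlinarith⟩)]
  rw [Real.one_rpow]
  norm_num
  ring_nf

-- pointwise bound, ordered version
lemma phi_le_B_aux {e x y : ℝ} (he0 : 0 < e) (he1 : e < 1) (hL : 1 ≤ Real.log (2/e))
    (hx : x ∈ Ioo (0:ℝ) 1) (hy : y ∈ Ioo (0:ℝ) 1) (hxy : x ≤ y) :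
    |vv e x - vv e y| ^ (2:ℝ) / |x - y| ^ (1 + (1/2:ℝ) * 2) ≤
      16 / Real.log (2/e) ^ 2 * (max x e) ^ (-(1/2) : ℝ) * (max y e) ^ (-(3/2) : ℝ) := by
  set L := Real.log (2/e) with hLdef
  have hLpos : 0 < L := by linarith
  set a := max x e with ha_def
  set b := max y e with hb_def
  have ha0 : 0 < a := lt_of_lt_of_le he0 (le_max_right _ _)
  have hb0 : 0 < b := lt_of_lt_of_le he0 (le_max_right _ _)
  have hab : a ≤ b := max_le_max hxy le_rfl
  have hBnn : (0:ℝ) ≤ 16 / L ^ 2 * a ^ (-(1/2) : ℝ) * b ^ (-(3/2) : ℝ) := by positivity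
  have hvx : vv e x = Real.log (2 / a) / L := vv_rep he0 he1 hx
  have hvy : vv e y = Real.log (2 / b) / L := vv_rep he0 he1 hy
  have hdiff : vv e x - vv e y = (Real.log b - Real.log a) / L := by
    rw [hvx, hvy, div_sub_div_same, Real.log_div (by norm_num) ha0.ne',
      Real.log_div (by norm_num) hb0.ne']
    ring_nf
  rcases eq_or_lt_of_le hab with heq | hlt
  · have h0 : vv e x - vv e y = 0 := by rw [hdiff, heq, sub_self, zero_div]
    rw [h0, abs_zero, Real.zero_rpow (by norm_num), zero_div]
    positivity
  · -- a < b, so y > e and b = y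
    have hyb : b = y := by
      rw [hb_def, max_eq_left]
      by_contra h
      push_neg at h
      have : b = e := by rw [hb_def, max_eq_right h.le]
      have : a < e := by rw [← this]; exact hlt
      exact absurd (le_max_right x e) (not_le.mpr this)
    have hba_le : b - a ≤ y - x := by
      have : x ≤ a := le_max_left _ _
      linarith [hyb]
    have hba_pos : 0 < b - a := by linarith
    have hyx_pos : 0 < y - x := by linarith
    have hexp : (1 + (1/2:ℝ) * 2) = ((2:ℕ):ℝ) := by norm_num
    have habs1 : |vv e x - vv e y| ^ (2:ℝ) = ((Real.log b - Real.log a)/L) ^ (2:ℕ) := by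
      rw [show (2:ℝ) = ((2:ℕ):ℝ) by norm_num, Real.rpow_natCast, sq_abs, hdiff]
    have habs2 : |x - y| ^ (1 + (1/2:ℝ) * 2) = (y - x) ^ (2:ℕ) := by
      rw [hexp, Real.rpow_natCast, abs_sub_comm, abs_of_pos hyx_pos]
    rw [habs1, habs2]
    have hlog_nn : 0 ≤ Real.log b - Real.log a := by
      have := Real.log_le_log ha0 hab; linarith
    have step1 : ((Real.log b - Real.log a)/L) ^ (2:ℕ) / (y - x) ^ (2:ℕ)
        ≤ ((Real.log b - Real.log a)/L) ^ (2:ℕ) / (b - a) ^ (2:ℕ) := by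
      apply div_le_div_of_nonneg_left (by positivity) (by positivity)
      exact pow_le_pow_left₀ hba_pos.le hba_le 2
    have step2 : ((Real.log b - Real.log a)/L) ^ (2:ℕ) / (b - a) ^ (2:ℕ)
        = (Real.log (b/a)) ^ 2 / (b-a) ^ 2 / L ^ 2 := by
      rw [Real.log_div hb0.ne' ha0.ne', div_pow, div_div, div_div, mul_comm]
    have step3 := key_alg ha0 hlt
    calc ((Real.log b - Real.log a)/L) ^ (2:ℕ) / (y - x) ^ (2:ℕ)
        ≤ ((Real.log b - Real.log a)/L) ^ (2:ℕ) / (b - a) ^ (2:ℕ) := step1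
      _ = (Real.log (b/a)) ^ 2 / (b-a) ^ 2 / L ^ 2 := step2
      _ ≤ 16 * a ^ (-(1/2) : ℝ) * b ^ (-(3/2) : ℝ) / L ^ 2 := by
          apply div_le_div_of_nonneg_right step3 (by positivity)
      _ = 16 / L ^ 2 * a ^ (-(1/2) : ℝ) * b ^ (-(3/2) : ℝ) := by ring

lemma phi_le_B {e x y : ℝ} (he0 : 0 < e) (he1 : e < 1) (hL : 1 ≤ Real.log (2/e))
    (hx : x ∈ Ioo (0:ℝ) 1) (hy : y ∈ Ioo (0:ℝ) 1) :
    |vv e x - vv e y| ^ (2:ℝ) / |x - y| ^ (1 + (1/2:ℝ) * 2) ≤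
      16 / Real.log (2/e) ^ 2 * (max (min x y) e) ^ (-(1/2) : ℝ) *
        (max (max x y) e) ^ (-(3/2) : ℝ) := by
  rcases le_total x y with h | h
  · rw [min_eq_left h, max_eq_right h]; exact phi_le_B_aux he0 he1 hL hx hy h
  · rw [min_eq_right h, max_eq_left h, abs_sub_comm (vv e x), abs_sub_comm x]
    exact phi_le_B_aux he0 he1 hL hy hx h

lemma BB_meas {e x : ℝ} : Measurable (fun y => BB e x y) := by
  unfold BB; fun_prop

lemma BB_bounded {e x : ℝ} (he0 : 0 < e) {y : ℝ} :
    |BB e x y| ≤ 16 / Real.log (2/e) ^ 2 * e ^ (-(1/2) : ℝ) * e ^ (-(3/2) : ℝ) := by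
  have h1 : (max (min x y) e) ^ (-(1/2) : ℝ) ≤ e ^ (-(1/2) : ℝ) :=
    Real.rpow_le_rpow_of_nonpos he0 (le_max_right _ _) (by norm_num)
  have h2 : (max (max x y) e) ^ (-(3/2) : ℝ) ≤ e ^ (-(3/2) : ℝ) :=
    Real.rpow_le_rpow_of_nonpos he0 (le_max_right _ _) (by norm_num)
  have hp1 : (0:ℝ) < max (min x y) e := lt_of_lt_of_le he0 (le_max_right _ _)
  have hp2 : (0:ℝ) < max (max x y) e := lt_of_lt_of_le he0 (le_max_right _ _)
  rw [BB, abs_of_nonneg (by positivity)]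
  have hc : (0:ℝ) ≤ 16 / Real.log (2/e) ^ 2 := by positivity
  calc 16 / Real.log (2/e) ^ 2 * (max (min x y) e) ^ (-(1/2) : ℝ) * (max (max x y) e) ^ (-(3/2) : ℝ)
      ≤ 16 / Real.log (2/e) ^ 2 * e ^ (-(1/2) : ℝ) * (max (max x y) e) ^ (-(3/2) : ℝ) := by
        apply mul_le_mul_of_nonneg_right (mul_le_mul_of_nonneg_left h1 hc) (by positivity)
    _ ≤ 16 / Real.log (2/e) ^ 2 * e ^ (-(1/2) : ℝ) * e ^ (-(3/2) : ℝ) := by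
        apply mul_le_mul_of_nonneg_left h2 (by positivity)

lemma BB_integrableOn {e x : ℝ} (he0 : 0 < e) {s : Set ℝ} (hs : MeasurableSet s)
    (hvol : volume s < ⊤) : IntegrableOn (fun y => BB e x y) s :=
  integrableOn_of_bounded' hs hvol BB_meas (fun _ _ => BB_bounded he0)

lemma inner_bound {e x : ℝ} (he0 : 0 < e) (he1 : e < 1) (hL : 1 ≤ Real.log (2/e))
    (hx : x ∈ Ioo (0:ℝ) 1) :
    ∫ y in Ioo (0:ℝ) 1, BB e x y ≤ 80 / (Real.log (2/e) ^ 2 * max x e) := by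
  obtain ⟨hx0, hx1⟩ := hx
  set L := Real.log (2/e) with hLdef
  have hLpos : (0:ℝ) < L := by linarith
  set c := 16 / L ^ 2 with hc_def
  have hc0 : 0 < c := by positivity
  set M := max x e with hM_def
  have hM0 : 0 < M := lt_of_lt_of_le he0 (le_max_right _ _)
  have hM1 : M ≤ 1 := max_le hx1.le he1.le
  have hxM : x ≤ M := le_max_left _ _
  have heM : e ≤ M := le_max_right _ _
  have hsplit : Ioc (0:ℝ) x ∪ Ioo x 1 = Ioo (0:ℝ) 1 := Ioc_union_Ioo_eq_Ioo hx0.le hx1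
  have hdisj : Disjoint (Ioc (0:ℝ) x) (Ioo x 1) := by
    rw [Set.disjoint_left]; rintro y ⟨_, h1⟩ ⟨h2, _⟩; exact absurd h1 (not_le.mpr h2)
  have hfin1 : volume (Ioc (0:ℝ) x) < ⊤ := by simp [Real.volume_Ioc]
  have hfin2 : volume (Ioo x (1:ℝ)) < ⊤ := by simp [Real.volume_Ioo]
  rw [← hsplit, setIntegral_union hdisj measurableSet_Ioo
    (BB_integrableOn he0 measurableSet_Ioc hfin1) (BB_integrableOn he0 measurableSet_Ioo hfin2)]
  -- Piece 1
  have hp1 : ∫ y in Ioc (0:ℝ) x, BB e x y ≤ 2 * c / M := by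
    have hb : ∀ y ∈ Ioc (0:ℝ) x, BB e x y ≤ (c * M ^ (-(3/2) : ℝ)) * y ^ (-(1/2) : ℝ) := by
      rintro y ⟨hy0, hyx⟩
      rw [BB, min_eq_right hyx, max_eq_left hyx, ← hLdef, ← hc_def, ← hM_def]
      have h1 : (max y e) ^ (-(1/2) : ℝ) ≤ y ^ (-(1/2) : ℝ) :=
        Real.rpow_le_rpow_of_nonpos hy0 (le_max_left _ _) (by norm_num)
      calc c * (max y e) ^ (-(1/2) : ℝ) * M ^ (-(3/2) : ℝ)
          ≤ c * y ^ (-(1/2) : ℝ) * M ^ (-(3/2) : ℝ) := by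
            apply mul_le_mul_of_nonneg_right (mul_le_mul_of_nonneg_left h1 hc0.le) (by positivity)
        _ = (c * M ^ (-(3/2) : ℝ)) * y ^ (-(1/2) : ℝ) := by ring
    have hint2 : IntegrableOn (fun y => (c * M ^ (-(3/2) : ℝ)) * y ^ (-(1/2) : ℝ)) (Ioc 0 x) := by
      apply Integrable.const_mul
      exact (intervalIntegrable_rpow' (by norm_num)).1
    calc ∫ y in Ioc (0:ℝ) x, BB e x y
        ≤ ∫ y in Ioc (0:ℝ) x, (c * M ^ (-(3/2) : ℝ)) * y ^ (-(1/2) : ℝ) :=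
          setIntegral_mono_on (BB_integrableOn he0 measurableSet_Ioc hfin1) hint2
            measurableSet_Ioc hb
      _ = (c * M ^ (-(3/2) : ℝ)) * (2 * x ^ ((1/2) : ℝ)) := by
          rw [MeasureTheory.integral_const_mul, int_rpow_half hx0.le]
      _ ≤ (c * M ^ (-(3/2) : ℝ)) * (2 * M ^ ((1/2) : ℝ)) := by
          apply mul_le_mul_of_nonneg_left _ (by positivity)
          apply mul_le_mul_of_nonneg_left _ (by norm_num)
          exact Real.rpow_le_rpow hx0.le hxM (by norm_num)
      _ = 2 * c * (M ^ (-(3/2) : ℝ) * M ^ ((1/2) : ℝ)) := by ring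
      _ = 2 * c / M := by
          rw [← Real.rpow_add hM0]
          norm_num
          rw [Real.rpow_neg_one, div_eq_mul_inv]
  -- Piece 2
  have hkey2 : ∫ y in Ioo x (1:ℝ), (max y e) ^ (-(3/2) : ℝ) ≤ 3 * M ^ (-(1/2) : ℝ) := by
    have hmeas3 : Measurable (fun y : ℝ => (max y e) ^ (-(3/2) : ℝ)) := by fun_prop
    have hbdd3 : ∀ (s : Set ℝ), ∀ y ∈ s, |(max y e) ^ (-(3/2) : ℝ)| ≤ e ^ (-(3/2) : ℝ) := by
      intro s y _
      rw [abs_of_nonneg (by positivity)]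
      exact Real.rpow_le_rpow_of_nonpos he0 (le_max_right _ _) (by norm_num)
    rcases le_total e x with hex | hxe
    · -- M = x, on Ioo x 1 max y e = y
      have hMx : M = x := max_eq_left hex
      have : ∫ y in Ioo x (1:ℝ), (max y e) ^ (-(3/2) : ℝ) = ∫ y in Ioo x (1:ℝ), y ^ (-(3/2) : ℝ) := by
        apply setIntegral_congr_fun measurableSet_Ioo
        rintro y ⟨hy1, hy2⟩
        show (y ⊔ e) ^ (-(3/2):ℝ) = y ^ (-(3/2):ℝ)
        rw [max_eq_left (le_trans hex hy1.le)]
      rw [this, int_rpow_threehalf hx0 hx1.le, hMx]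
      have : (0:ℝ) < x ^ (-(1/2) : ℝ) := Real.rpow_pos_of_pos hx0 _
      linarith
    · -- x ≤ e, M = e
      have hMe' : M = e := max_eq_right hxe
      have hsplit2 : Ioc x e ∪ Ioo e 1 = Ioo x 1 := Ioc_union_Ioo_eq_Ioo hxe he1
      have hdisj2 : Disjoint (Ioc x e) (Ioo e 1) := by
        rw [Set.disjoint_left]; rintro y ⟨_, h1⟩ ⟨h2, _⟩; exact absurd h1 (not_le.mpr h2)
      have hi1 : IntegrableOn (fun y : ℝ => (max y e) ^ (-(3/2) : ℝ)) (Ioc x e) :=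
        integrableOn_of_bounded' measurableSet_Ioc (by simp [Real.volume_Ioc]) hmeas3
          (hbdd3 _)
      have hi2 : IntegrableOn (fun y : ℝ => (max y e) ^ (-(3/2) : ℝ)) (Ioo e 1) :=
        integrableOn_of_bounded' measurableSet_Ioo (by simp [Real.volume_Ioo]) hmeas3
          (hbdd3 _)
      rw [← hsplit2, setIntegral_union hdisj2 measurableSet_Ioo hi1 hi2]
      have hq1 : ∫ y in Ioc x e, (max y e) ^ (-(3/2) : ℝ) ≤ e ^ (-(1/2) : ℝ) := by
        have : ∫ y in Ioc x e, (max y e) ^ (-(3/2) : ℝ) = ∫ _ in Ioc x e, e ^ (-(3/2) : ℝ) := by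
          apply setIntegral_congr_fun measurableSet_Ioc
          rintro y ⟨_, hy2⟩
          show (y ⊔ e) ^ (-(3/2):ℝ) = e ^ (-(3/2):ℝ)
          rw [max_eq_right hy2]
        rw [this, setIntegral_const, measureReal_def, Real.volume_Ioc, smul_eq_mul]
        calc (ENNReal.ofReal (e - x)).toReal * e ^ (-(3/2) : ℝ)
            ≤ e * e ^ (-(3/2) : ℝ) := by
              apply mul_le_mul_of_nonneg_right _ (by positivity)
              rw [ENNReal.toReal_ofReal_eq_iff.mpr]
              · linarith
              · linarith
          _ = e ^ (-(1/2) : ℝ) := by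
              nth_rewrite 1 [← Real.rpow_one e]
              rw [← Real.rpow_add he0]; norm_num
      have hq2 : ∫ y in Ioo e (1:ℝ), (max y e) ^ (-(3/2) : ℝ) ≤ 2 * e ^ (-(1/2) : ℝ) := by
        have : ∫ y in Ioo e (1:ℝ), (max y e) ^ (-(3/2) : ℝ) = ∫ y in Ioo e (1:ℝ), y ^ (-(3/2) : ℝ) := by
          apply setIntegral_congr_fun measurableSet_Ioo
          rintro y ⟨hy1, _⟩
          show (y ⊔ e) ^ (-(3/2):ℝ) = y ^ (-(3/2):ℝ)
          rw [max_eq_left hy1.le]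
        rw [this, int_rpow_threehalf he0 he1.le]
        have : (0:ℝ) < e ^ (-(1/2) : ℝ) := Real.rpow_pos_of_pos he0 _
        linarith
      rw [hMe']
      linarith
  have hp2 : ∫ y in Ioo x (1:ℝ), BB e x y ≤ 3 * c / M := by
    have heq : ∫ y in Ioo x (1:ℝ), BB e x y
        = (c * M ^ (-(1/2) : ℝ)) * ∫ y in Ioo x (1:ℝ), (max y e) ^ (-(3/2) : ℝ) := by
      rw [← MeasureTheory.integral_const_mul]
      apply setIntegral_congr_fun measurableSet_Ioo
      rintro y ⟨hy1, _⟩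
      show BB e x y = c * M ^ (-(1/2):ℝ) * (y ⊔ e) ^ (-(3/2):ℝ)
      rw [BB, min_eq_left hy1.le, max_eq_right hy1.le, ← hLdef, ← hc_def, ← hM_def]
    rw [heq]
    calc (c * M ^ (-(1/2) : ℝ)) * ∫ y in Ioo x (1:ℝ), (max y e) ^ (-(3/2) : ℝ)
        ≤ (c * M ^ (-(1/2) : ℝ)) * (3 * M ^ (-(1/2) : ℝ)) :=
          mul_le_mul_of_nonneg_left hkey2 (by positivity)
      _ = 3 * c * (M ^ (-(1/2) : ℝ) * M ^ (-(1/2) : ℝ)) := by ring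
      _ = 3 * c / M := by
          rw [← Real.rpow_add hM0]
          norm_num
          rw [Real.rpow_neg_one, div_eq_mul_inv]
  have : 2 * c / M + 3 * c / M = 80 / (L ^ 2 * M) := by
    rw [hc_def]
    field_simp
    ring
  linarith

lemma vv_meas {e : ℝ} : Measurable (vv e) := by
  apply Measurable.min measurable_const
  exact (Real.measurable_log.comp (measurable_const.div measurable_id)).div measurable_const

lemma phi_meas {e : ℝ} :
    Measurable (fun q : ℝ × ℝ =>
      |vv e q.1 - vv e q.2| ^ (2:ℝ) / |q.1 - q.2| ^ (1 + (1/2:ℝ) * 2)) := by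
  have hr2 : Measurable (fun y : ℝ => y ^ (2:ℝ)) := by fun_prop
  have hrc : Measurable (fun y : ℝ => y ^ (1 + (1/2:ℝ)*2)) := by fun_prop
  exact (hr2.comp ((((vv_meas (e := e)).comp measurable_fst).sub
      ((vv_meas (e := e)).comp measurable_snd)).abs)).div
    (hrc.comp ((measurable_fst.sub measurable_snd).abs))

lemma phi_nonneg {e x y : ℝ} :
    0 ≤ |vv e x - vv e y| ^ (2:ℝ) / |x - y| ^ (1 + (1/2:ℝ) * 2) := by
  apply div_nonneg <;> positivity

lemma phi_prod_integrable {e : ℝ} (he0 : 0 < e) (he1 : e < 1) (hL : 1 ≤ Real.log (2/e)) :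
    Integrable
      (fun q : ℝ × ℝ => |vv e q.1 - vv e q.2| ^ (2:ℝ) / |q.1 - q.2| ^ (1 + (1/2:ℝ) * 2))
      ((volume.restrict (Ioo (0:ℝ) 1)).prod (volume.restrict (Ioo (0:ℝ) 1))) := by
  have hfin : IsFiniteMeasure (volume.restrict (Ioo (0:ℝ) 1)) := by
    constructor; rw [Measure.restrict_apply_univ]; simp [Real.volume_Ioo]
  set K := 16 / Real.log (2/e) ^ 2 * e ^ (-(1/2) : ℝ) * e ^ (-(3/2) : ℝ) with hK
  apply Integrable.mono' (g := fun _ => K) (integrable_const K) phi_meas.aestronglyMeasurable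
  rw [Measure.prod_restrict, ae_restrict_iff' (measurableSet_Ioo.prod measurableSet_Ioo)]
  apply Eventually.of_forall
  rintro ⟨x, y⟩ ⟨hx, hy⟩
  rw [Real.norm_eq_abs, abs_of_nonneg phi_nonneg]
  exact le_trans (phi_le_B he0 he1 hL hx hy) (le_trans (le_abs_self _) (BB_bounded he0))

lemma outer_int {e : ℝ} (he0 : 0 < e) (he1 : e < 1) :
    ∫ x in Ioo (0:ℝ) 1, (max x e)⁻¹ ≤ 1 + Real.log (2/e) := by
  have hsplit : Ioc (0:ℝ) e ∪ Ioo e 1 = Ioo (0:ℝ) 1 := Ioc_union_Ioo_eq_Ioo he0.le he1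
  have hdisj : Disjoint (Ioc (0:ℝ) e) (Ioo e 1) := by
    rw [Set.disjoint_left]; rintro y ⟨_, h1⟩ ⟨h2, _⟩; exact absurd h1 (not_le.mpr h2)
  have hmeas : Measurable (fun x : ℝ => (max x e)⁻¹) := by fun_prop
  have hbdd : ∀ (s : Set ℝ), ∀ x ∈ s, |(max x e)⁻¹| ≤ e⁻¹ := by
    intro s x _
    rw [abs_of_nonneg (by positivity)]
    exact inv_anti₀ he0 (le_max_right _ _)
  have hi1 : IntegrableOn (fun x : ℝ => (max x e)⁻¹) (Ioc 0 e) :=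
    integrableOn_of_bounded' measurableSet_Ioc (by simp [Real.volume_Ioc]) hmeas (hbdd _)
  have hi2 : IntegrableOn (fun x : ℝ => (max x e)⁻¹) (Ioo e 1) :=
    integrableOn_of_bounded' measurableSet_Ioo (by simp [Real.volume_Ioo]) hmeas (hbdd _)
  rw [← hsplit, setIntegral_union hdisj measurableSet_Ioo hi1 hi2]
  have h1 : ∫ x in Ioc (0:ℝ) e, (max x e)⁻¹ = 1 := by
    have : ∫ x in Ioc (0:ℝ) e, (max x e)⁻¹ = ∫ _ in Ioc (0:ℝ) e, e⁻¹ := by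
      apply setIntegral_congr_fun measurableSet_Ioc
      rintro x ⟨_, hx2⟩
      show (x ⊔ e)⁻¹ = e⁻¹
      rw [max_eq_right hx2]
    rw [this, setIntegral_const, measureReal_def, Real.volume_Ioc, smul_eq_mul, sub_zero,
      ENNReal.toReal_ofReal he0.le, mul_inv_cancel₀ he0.ne']
  have h2 : ∫ x in Ioo e (1:ℝ), (max x e)⁻¹ ≤ Real.log (2/e) := by
    have heq : ∫ x in Ioo e (1:ℝ), (max x e)⁻¹ = ∫ x in Ioo e (1:ℝ), x⁻¹ := by
      apply setIntegral_congr_fun measurableSet_Ioo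
      rintro x ⟨hx1, _⟩
      show (x ⊔ e)⁻¹ = x⁻¹
      rw [max_eq_left hx1.le]
    have hval : ∫ x in Ioo e (1:ℝ), x⁻¹ = Real.log (1/e) := by
      rw [← integral_Ioc_eq_integral_Ioo, ← integral_of_le he1.le]
      rw [integral_inv (by
          simp only [Set.mem_uIcc]; push_neg
          constructor <;> intro h <;> nlinarith)]
    rw [heq, hval]
    apply Real.log_le_log (by positivity)
    gcongr
    norm_num
  linarith

lemma double_bound {e : ℝ} (he0 : 0 < e) (he1 : e < 1) (hL : 1 ≤ Real.log (2/e)) :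
    ∫ x in Ioo (0:ℝ) 1, ∫ y in Ioo (0:ℝ) 1,
        |vv e x - vv e y| ^ (2:ℝ) / |x - y| ^ (1 + (1/2:ℝ) * 2)
      ≤ 160 / Real.log (2/e) := by
  set L := Real.log (2/e) with hLdef
  have hLpos : (0:ℝ) < L := by linarith
  have hJ_int : IntegrableOn (fun x => ∫ y in Ioo (0:ℝ) 1,
      |vv e x - vv e y| ^ (2:ℝ) / |x - y| ^ (1 + (1/2:ℝ) * 2)) (Ioo (0:ℝ) 1) :=
    (phi_prod_integrable he0 he1 hL).integral_prod_left
  have hG_int : IntegrableOn (fun x : ℝ => 80 / L^2 * (max x e)⁻¹) (Ioo (0:ℝ) 1) := by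
    apply integrableOn_of_bounded' measurableSet_Ioo (by simp [Real.volume_Ioo])
      (by fun_prop) (K := 80 / L^2 * e⁻¹)
    intro x _
    rw [abs_of_nonneg (by positivity)]
    apply mul_le_mul_of_nonneg_left _ (by positivity)
    exact inv_anti₀ he0 (le_max_right _ _)
  have hpoint : ∀ x ∈ Ioo (0:ℝ) 1, (∫ y in Ioo (0:ℝ) 1,
      |vv e x - vv e y| ^ (2:ℝ) / |x - y| ^ (1 + (1/2:ℝ) * 2)) ≤ 80 / L^2 * (max x e)⁻¹ := by
    intro x hx
    have hphi_int : IntegrableOn (fun y => |vv e x - vv e y| ^ (2:ℝ) /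
        |x - y| ^ (1 + (1/2:ℝ) * 2)) (Ioo (0:ℝ) 1) := by
      apply integrableOn_of_bounded' measurableSet_Ioo (by simp [Real.volume_Ioo])
        ((phi_meas (e := e)).comp (measurable_const.prodMk measurable_id))
        (K := 16 / L ^ 2 * e ^ (-(1/2) : ℝ) * e ^ (-(3/2) : ℝ))
      intro y hy
      show abs (|vv e x - vv e y| ^ (2:ℝ) / |x - y| ^ (1 + (1/2:ℝ) * 2)) ≤
        16 / L ^ 2 * e ^ (-(1/2) : ℝ) * e ^ (-(3/2) : ℝ)
      rw [abs_of_nonneg phi_nonneg]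
      exact le_trans (phi_le_B he0 he1 hL hx hy) (le_trans (le_abs_self _) (BB_bounded he0))
    calc ∫ y in Ioo (0:ℝ) 1, |vv e x - vv e y| ^ (2:ℝ) / |x - y| ^ (1 + (1/2:ℝ) * 2)
        ≤ ∫ y in Ioo (0:ℝ) 1, BB e x y :=
          setIntegral_mono_on hphi_int
            (BB_integrableOn he0 measurableSet_Ioo (by simp [Real.volume_Ioo]))
            measurableSet_Ioo (fun y hy => phi_le_B he0 he1 hL hx hy)
      _ ≤ 80 / (L ^ 2 * max x e) := inner_bound he0 he1 hL hx
      _ = 80 / L^2 * (max x e)⁻¹ := by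
          rw [div_eq_mul_inv, mul_inv, ← mul_assoc]
          rw [div_eq_mul_inv]
  calc ∫ x in Ioo (0:ℝ) 1, ∫ y in Ioo (0:ℝ) 1,
        |vv e x - vv e y| ^ (2:ℝ) / |x - y| ^ (1 + (1/2:ℝ) * 2)
      ≤ ∫ x in Ioo (0:ℝ) 1, 80 / L^2 * (max x e)⁻¹ :=
        setIntegral_mono_on hJ_int hG_int measurableSet_Ioo hpoint
    _ = 80 / L^2 * ∫ x in Ioo (0:ℝ) 1, (max x e)⁻¹ := MeasureTheory.integral_const_mul _ _
    _ ≤ 80 / L^2 * (1 + L) := by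
        apply mul_le_mul_of_nonneg_left (outer_int he0 he1) (by positivity)
    _ ≤ 160 / L := by
        rw [div_mul_eq_mul_div, div_le_div_iff₀ (by positivity) (by positivity)]
        nlinarith

lemma sqrt2_le : (2:ℝ) ^ ((1/2) : ℝ) ≤ 3/2 := by
  have h : ((2:ℝ) ^ ((1/2):ℝ)) ^ (2:ℕ) = 2 := by
    rw [← Real.rpow_natCast ((2:ℝ) ^ ((1/2):ℝ)) 2, ← Real.rpow_mul (by norm_num)]
    norm_num
  nlinarith [Real.rpow_nonneg (by norm_num : (0:ℝ) ≤ 2) ((1/2):ℝ)]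

lemma log_le_sqrt {x : ℝ} (hx : 0 < x) (hx1 : x ≤ 1) :
    Real.log (2 / x) ≤ 3 * x ^ (-(1/2) : ℝ) := by
  have h2x : (0:ℝ) < 2 / x := by positivity
  have h1 : Real.log ((2/x) ^ ((1/2):ℝ)) = (1/2) * Real.log (2/x) := Real.log_rpow h2x _
  have h2 : Real.log ((2/x) ^ ((1/2):ℝ)) ≤ (2/x) ^ ((1/2):ℝ) - 1 :=
    Real.log_le_sub_one_of_pos (Real.rpow_pos_of_pos h2x _)
  have h3 : (2/x) ^ ((1/2):ℝ) = 2 ^ ((1/2):ℝ) * x ^ (-(1/2) : ℝ) := by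
    rw [Real.div_rpow (by norm_num) hx.le, Real.rpow_neg hx.le, div_eq_mul_inv]
  have h4 : (2:ℝ) ^ ((1/2):ℝ) * x ^ (-(1/2) : ℝ) ≤ (3/2) * x ^ (-(1/2) : ℝ) :=
    mul_le_mul_of_nonneg_right sqrt2_le (by positivity)
  linarith [h1, h2, h3 ▸ h2, h4, h3 ▸ le_trans h2 (le_of_eq rfl)]

lemma integrableOn_rpow_half : IntegrableOn (fun x : ℝ => x ^ (-(1/2) : ℝ)) (Ioo (0:ℝ) 1) := by
  have := (intervalIntegrable_rpow' (a := 0) (b := 1) (r := -(1/2)) (by norm_num)).1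
  exact this.mono_set Ioo_subset_Ioc_self

lemma vv_integrableOn {e : ℝ} (he0 : 0 < e) (he1 : e < 1) :
    IntegrableOn (vv e) (Ioo (0:ℝ) 1) := by
  apply integrableOn_of_bounded' measurableSet_Ioo (by simp [Real.volume_Ioo]) vv_meas (K := 1)
  intro x hx
  obtain ⟨h0, h1⟩ := vv_mem he0 he1 hx
  rw [abs_of_nonneg h0]; exact h1

lemma avg_bound {e : ℝ} (he0 : 0 < e) (he1 : e < 1) (hL : 1 ≤ Real.log (2/e)) :
    avgS (Ioo 0 1) (vv e) ∈ Icc (0:ℝ) (6 / Real.log (2/e)) := by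
  set L := Real.log (2/e) with hLdef
  have hLpos : (0:ℝ) < L := by linarith
  have hvol : ((volume (Ioo (0:ℝ) 1)).toReal)⁻¹ = 1 := by
    simp [Real.volume_Ioo]
  rw [avgS, hvol, one_mul]
  constructor
  · exact setIntegral_nonneg measurableSet_Ioo fun x hx => (vv_mem he0 he1 hx).1
  · have hbound : ∀ x ∈ Ioo (0:ℝ) 1, vv e x ≤ (3 / L) * x ^ (-(1/2) : ℝ) := by
      rintro x ⟨hx0, hx1⟩
      have h1 : vv e x ≤ Real.log (2 / x) / L := min_le_right _ _
      have h2 : Real.log (2 / x) ≤ 3 * x ^ (-(1/2) : ℝ) := log_le_sqrt hx0 hx1.le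
      calc vv e x ≤ Real.log (2 / x) / L := h1
        _ ≤ 3 * x ^ (-(1/2) : ℝ) / L := by gcongr
        _ = (3 / L) * x ^ (-(1/2) : ℝ) := by ring
    calc ∫ x in Ioo (0:ℝ) 1, vv e x
        ≤ ∫ x in Ioo (0:ℝ) 1, (3 / L) * x ^ (-(1/2) : ℝ) :=
          setIntegral_mono_on (vv_integrableOn he0 he1)
            (integrableOn_rpow_half.const_mul _) measurableSet_Ioo hbound
      _ = (3 / L) * ∫ x in Ioo (0:ℝ) 1, x ^ (-(1/2) : ℝ) := MeasureTheory.integral_const_mul _ _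
      _ = 6 / L := by
          rw [← integral_Ioc_eq_integral_Ioo, int_rpow_half (by norm_num : (0:ℝ) ≤ 1)]
          rw [Real.one_rpow]
          ring

lemma hardy_int {e : ℝ} (he0 : 0 < e) (he1 : e < 1) (hL : 1 ≤ Real.log (2/e)) :
    ∫ x in Ioo (e^2/2) e, (x * (Real.log (2/x))^2)⁻¹ = 1 / (2 * Real.log (2/e)) := by
  set L := Real.log (2/e) with hLdef
  have hLpos : (0:ℝ) < L := by linarith
  have ha0 : (0:ℝ) < e^2/2 := by positivity
  have hae : e^2/2 < e := by nlinarith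
  have huIcc : uIcc (e^2/2) e = Icc (e^2/2) e := uIcc_of_le hae.le
  set F := fun x : ℝ => (Real.log 2 - Real.log x)⁻¹ with hF
  have hderiv : ∀ x ∈ uIcc (e^2/2) e,
      HasDerivAt F ((x * (Real.log (2/x))^2)⁻¹) x := by
    intro x hx
    rw [huIcc] at hx
    obtain ⟨hx1, hx2⟩ := hx
    have hx0 : (0:ℝ) < x := lt_of_lt_of_le ha0 hx1
    have hxlt1 : x < 1 := lt_of_le_of_lt hx2 he1
    have hlog_ne : Real.log 2 - Real.log x ≠ 0 := by
      have : Real.log x < 0 := Real.log_neg hx0 hxlt1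
      have : (0:ℝ) < Real.log 2 := Real.log_pos (by norm_num)
      linarith [Real.log_neg hx0 hxlt1]
    have h1 : HasDerivAt (fun x : ℝ => Real.log 2 - Real.log x) (-x⁻¹) x := by
      have h := (hasDerivAt_const x (Real.log 2)).sub (Real.hasDerivAt_log hx0.ne')
      rw [zero_sub] at h; exact h
    have h2 := h1.inv hlog_ne
    refine h2.congr_deriv ?_
    rw [Real.log_div (by norm_num) hx0.ne']
    field_simp
  have hcont : ContinuousOn (fun x : ℝ => (x * (Real.log (2/x))^2)⁻¹) (uIcc (e^2/2) e) := by
    rw [huIcc]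
    apply ContinuousOn.inv₀
    · apply ContinuousOn.mul continuousOn_id
      apply ContinuousOn.pow
      apply ContinuousOn.log
      · apply ContinuousOn.div continuousOn_const continuousOn_id
        rintro x ⟨hx1, _⟩
        exact (lt_of_lt_of_le ha0 hx1).ne'
      · rintro x ⟨hx1, _⟩
        have hx0 : (0:ℝ) < x := lt_of_lt_of_le ha0 hx1
        positivity
    · rintro x ⟨hx1, hx2⟩
      have hx0 : (0:ℝ) < x := lt_of_lt_of_le ha0 hx1
      have hxlt1 : x < 1 := lt_of_le_of_lt hx2 he1
      have : (0:ℝ) < Real.log (2/x) := by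
        apply Real.log_pos
        rw [lt_div_iff₀ hx0]; linarith
      positivity
  have hii : IntervalIntegrable (fun x : ℝ => (x * (Real.log (2/x))^2)⁻¹) volume (e^2/2) e :=
    hcont.intervalIntegrable
  have hFTC := intervalIntegral.integral_eq_sub_of_hasDerivAt hderiv hii
  have hIoo : ∫ x in Ioo (e^2/2) e, (x * (Real.log (2/x))^2)⁻¹
      = ∫ x in (e^2/2)..e, (x * (Real.log (2/x))^2)⁻¹ := by
    rw [intervalIntegral.integral_of_le hae.le, integral_Ioc_eq_integral_Ioo]
  rw [hIoo, hFTC]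
  show (Real.log 2 - Real.log e)⁻¹ - (Real.log 2 - Real.log (e^2/2))⁻¹ = 1/(2*L)
  have hFe : Real.log 2 - Real.log e = L := by
    rw [hLdef, Real.log_div (by norm_num) he0.ne']
  have hFa : Real.log 2 - Real.log (e^2/2) = 2 * L := by
    have : Real.log (e^2/2) = 2 * Real.log e - Real.log 2 := by
      rw [Real.log_div (by positivity) (by norm_num), Real.log_pow]
      push_cast; ring
    rw [this, hLdef, Real.log_div (by norm_num) he0.ne']
    ring
  rw [hFe, hFa]
  field_simp
  ring

set_option maxHeartbeats 1000000 in
/-- Sharpness of the weight `δ_x^{-1/2}/log(2/δ_x)` in the boundary fractional Hardy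
inequality on `(0,1)` for `s = 1/2`, `p = τ = 2`: no measurable weight `f` tending to `∞`
at `0+` can be added. -/
theorem sharpness_boundary_fractional_hardy :
    ¬ ∃ f : ℝ → ℝ, Measurable f ∧ (∀ x ∈ Ioo (0 : ℝ) 1, 0 ≤ f x) ∧
      Tendsto f (𝓝[>] (0 : ℝ)) atTop ∧
      ∃ C > 0, ∀ u : ℝ → ℝ, Measurable u →
        IntegrableOn (fun x => |u x| ^ (2 : ℝ)) (Ioo 0 1) →
        Integrable
          (fun q : ℝ × ℝ => |u q.1 - u q.2| ^ (2 : ℝ) / |q.1 - q.2| ^ (1 + (1 / 2 : ℝ) * 2))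
          ((volume.restrict (Ioo (0 : ℝ) 1)).prod (volume.restrict (Ioo (0 : ℝ) 1))) →
        (∫⁻ x in Ioo (0 : ℝ) 1,
            ENNReal.ofReal (f x ^ 2 * (u x - avgS (Ioo 0 1) u) ^ 2 /
              (min x (1 - x) * (Real.log (2 / min x (1 - x))) ^ 2))) ^ (1 / 2 : ℝ)
          ≤ ENNReal.ofReal (C * gagliardoS (1 / 2) 2 (Ioo 0 1) u) := by
  rintro ⟨f, hfm, hf0, hftop, C, hC0, hC⟩
  set N := 36 * (C + 1) with hN_def
  have hN0 : (0:ℝ) < N := by positivity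
  have hev : ∀ᶠ x in 𝓝[>] (0:ℝ), N ≤ f x := hftop.eventually_ge_atTop N
  obtain ⟨w, hw, hsub⟩ := mem_nhdsGT_iff_exists_Ioo_subset.mp hev
  rw [Set.mem_Ioi] at hw
  set e := min (w/2) (2 * Real.exp (-24)) with he_def
  have he0 : 0 < e := lt_min (by positivity) (by positivity)
  have heB : e ≤ 2 * Real.exp (-24) := min_le_right _ _
  obtain ⟨he1, hL24, heH⟩ := e_facts he0 heB
  set L := Real.log (2/e) with hLdef
  have hL1 : (1:ℝ) ≤ L := by linarith
  have hLpos : (0:ℝ) < L := by linarith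
  have hew : e < w := lt_of_le_of_lt (min_le_left _ _) (by linarith)
  -- apply the inequality to u = vv e
  have hu_sq : IntegrableOn (fun x => |vv e x| ^ (2:ℝ)) (Ioo (0:ℝ) 1) := by
    have hm2 : Measurable (fun y : ℝ => y ^ (2:ℝ)) := by fun_prop
    apply integrableOn_of_bounded' measurableSet_Ioo (by simp [Real.volume_Ioo])
      (hm2.comp vv_meas.abs) (K := 1)
    intro x hx
    obtain ⟨h0', h1'⟩ := vv_mem he0 he1 hx
    show abs (|vv e x| ^ (2:ℝ)) ≤ 1
    rw [abs_of_nonneg (Real.rpow_nonneg (abs_nonneg _) _)]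
    apply Real.rpow_le_one (abs_nonneg _) _ (by norm_num)
    rw [abs_of_nonneg h0']; exact h1'
  have hineq := hC (vv e) vv_meas hu_sq (phi_prod_integrable he0 he1 hL1)
  -- average bounds
  set A := avgS (Ioo 0 1) (vv e) with hA_def
  obtain ⟨hA0, hA6⟩ := avg_bound he0 he1 hL1
  have hA4 : A ≤ 1/4 := by
    refine le_trans hA6 ?_
    rw [div_le_div_iff₀ hLpos (by norm_num)]
    linarith
  -- lower bound of the weighted integral
  set S := Ioo (e^2/2) e with hS_def
  have ha0' : (0:ℝ) < e^2/2 := by positivity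
  have hS_sub : S ⊆ Ioo (0:ℝ) 1 := by
    rintro x ⟨h1, h2⟩; exact ⟨lt_trans ha0' h1, lt_trans h2 he1⟩
  have hfN : ∀ x ∈ S, N ≤ f x := by
    rintro x ⟨h1, h2⟩
    exact hsub ⟨lt_trans ha0' h1, lt_trans h2 hew⟩
  have hFmeas : Measurable (fun x => ENNReal.ofReal (f x ^ 2 * (vv e x - A) ^ 2 /
      (min x (1 - x) * (Real.log (2 / min x (1 - x))) ^ 2))) := by
    have hmin_meas : Measurable (fun x : ℝ => min x (1 - x)) :=
      measurable_id.min (measurable_const.sub measurable_id)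
    have hlog_meas : Measurable (fun x : ℝ => Real.log (2 / min x (1 - x))) :=
      Real.measurable_log.comp (measurable_const.div hmin_meas)
    exact (((hfm.pow_const 2).mul ((vv_meas.sub measurable_const).pow_const 2)).div
      (hmin_meas.mul (hlog_meas.pow_const 2))).ennreal_ofReal
  have hpoint : ∀ x ∈ S,
      ENNReal.ofReal (N^2/4 * (x * (Real.log (2/x))^2)⁻¹)
        ≤ ENNReal.ofReal (f x ^ 2 * (vv e x - A) ^ 2 /
            (min x (1 - x) * (Real.log (2 / min x (1 - x))) ^ 2)) := by
    intro x hx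
    obtain ⟨hx0, hx1⟩ := hS_sub hx
    have hxe : x < e := hx.2
    have hmin : min x (1-x) = x := min_eq_left (by linarith)
    have hvv1 : vv e x = 1 := vv_one he0 he1 ⟨hx0, hx1⟩ hxe.le
    apply ENNReal.ofReal_le_ofReal
    have hlogpos : 0 < Real.log (2/x) := by
      apply Real.log_pos; rw [lt_div_iff₀ hx0]; linarith
    rw [hmin, hvv1, div_eq_mul_inv]
    have h1 : N^2 ≤ f x ^ 2 := by nlinarith [hfN x hx]
    have h2 : (1/4 : ℝ) ≤ (1 - A)^2 := by nlinarith
    have hinv_nn : (0:ℝ) ≤ (x * (Real.log (2/x))^2)⁻¹ := by positivity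
    calc N^2/4 * (x * (Real.log (2/x))^2)⁻¹
        = (N^2 * (1/4)) * (x * (Real.log (2/x))^2)⁻¹ := by ring
      _ ≤ (f x ^ 2 * (1 - A)^2) * (x * (Real.log (2/x))^2)⁻¹ := by
          apply mul_le_mul_of_nonneg_right _ hinv_nn
          apply mul_le_mul h1 h2 (by norm_num) (by positivity)
  have hGint : IntegrableOn (fun x => N^2/4 * (x * (Real.log (2/x))^2)⁻¹) S := by
    apply Integrable.const_mul
    apply integrableOn_of_bounded' measurableSet_Ioo (by simp [Real.volume_Ioo])
      ((measurable_id.mul ((Real.measurable_log.comp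
        (measurable_const.div measurable_id)).pow_const 2)).inv)
      (K := ((e^2/2) * (Real.log 2)^2)⁻¹)
    intro x hx
    obtain ⟨hx0, hx1⟩ := hS_sub hx
    have hlog2 : Real.log 2 ≤ Real.log (2/x) := by
      apply Real.log_le_log (by norm_num)
      rw [le_div_iff₀ hx0]; linarith
    have hlog2pos : (0:ℝ) < Real.log 2 := Real.log_pos (by norm_num)
    have hprod : (e^2/2) * (Real.log 2)^2 ≤ x * (Real.log (2/x))^2 := by
      apply mul_le_mul hx.1.le _ (by positivity) hx0.le
      nlinarith
    show |(x * (Real.log (2/x))^2)⁻¹| ≤ ((e^2/2) * (Real.log 2)^2)⁻¹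
    rw [abs_of_nonneg (by positivity)]
    exact inv_anti₀ (by positivity) hprod
  have hGnn : 0 ≤ᵐ[volume.restrict S] (fun x => N^2/4 * (x * (Real.log (2/x))^2)⁻¹) := by
    have : ∀ᵐ x ∂(volume.restrict S), x ∈ S := by
      rw [hS_def]
      exact ae_restrict_mem measurableSet_Ioo
    filter_upwards [this] with x hx
    obtain ⟨hx0, hx1⟩ := hS_sub hx
    positivity
  have hGval : ∫ x in S, N^2/4 * (x * (Real.log (2/x))^2)⁻¹ = N^2/(8*L) := by
    rw [MeasureTheory.integral_const_mul, hardy_int he0 he1 hL1, ← hLdef]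
    field_simp
    ring
  have hlow : ENNReal.ofReal (N^2/(8*L)) ≤ ∫⁻ x in Ioo (0:ℝ) 1,
      ENNReal.ofReal (f x ^ 2 * (vv e x - A) ^ 2 /
        (min x (1 - x) * (Real.log (2 / min x (1 - x))) ^ 2)) := by
    calc ENNReal.ofReal (N^2/(8*L))
        = ∫⁻ x in S, ENNReal.ofReal (N^2/4 * (x * (Real.log (2/x))^2)⁻¹) := by
          rw [← hGval]; exact ofReal_integral_eq_lintegral_ofReal hGint hGnn
      _ ≤ ∫⁻ x in S, ENNReal.ofReal (f x ^ 2 * (vv e x - A) ^ 2 /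
            (min x (1 - x) * (Real.log (2 / min x (1 - x))) ^ 2)) :=
          setLIntegral_mono hFmeas hpoint
      _ ≤ ∫⁻ x in Ioo (0:ℝ) 1, ENNReal.ofReal (f x ^ 2 * (vv e x - A) ^ 2 /
            (min x (1 - x) * (Real.log (2 / min x (1 - x))) ^ 2)) :=
          lintegral_mono' (Measure.restrict_mono hS_sub le_rfl) le_rfl
  -- upper bound of the Gagliardo seminorm
  have hI0 : 0 ≤ ∫ x in Ioo (0:ℝ) 1, ∫ y in Ioo (0:ℝ) 1,
      |vv e x - vv e y| ^ (2:ℝ) / |x - y| ^ (1 + (1/2:ℝ) * 2) :=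
    setIntegral_nonneg measurableSet_Ioo fun x _ =>
      setIntegral_nonneg measurableSet_Ioo fun y _ => phi_nonneg
  have hgagdef : gagliardoS (1/2) 2 (Ioo 0 1) (vv e)
      = (∫ x in Ioo (0:ℝ) 1, ∫ y in Ioo (0:ℝ) 1,
          |vv e x - vv e y| ^ (2:ℝ) / |x - y| ^ (1 + (1/2:ℝ) * 2)) ^ ((1:ℝ)/2) := rfl
  have hgag : C * gagliardoS (1/2) 2 (Ioo 0 1) (vv e) ≤ C * (160/L) ^ ((1:ℝ)/2) := by
    apply mul_le_mul_of_nonneg_left _ hC0.le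
    rw [hgagdef]
    exact Real.rpow_le_rpow hI0 (double_bound he0 he1 hL1) (by norm_num)
  -- combine
  have hchain : (ENNReal.ofReal (N^2/(8*L))) ^ ((1:ℝ)/2)
      ≤ ENNReal.ofReal (C * (160/L) ^ ((1:ℝ)/2)) :=
    le_trans (ENNReal.rpow_le_rpow hlow (by norm_num))
      (le_trans hineq (ENNReal.ofReal_le_ofReal hgag))
  rw [ENNReal.ofReal_rpow_of_nonneg (by positivity) (by norm_num)] at hchain
  have hreal : (N^2/(8*L)) ^ ((1:ℝ)/2) ≤ C * (160/L) ^ ((1:ℝ)/2) :=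
    (ENNReal.ofReal_le_ofReal_iff (by positivity)).mp hchain
  have ha : (0:ℝ) < N^2/(8*L) := by positivity
  have h1 : ((N^2/(8*L)) ^ ((1:ℝ)/2))^(2:ℕ) = N^2/(8*L) := by
    rw [← Real.rpow_natCast _ 2, ← Real.rpow_mul ha.le]; norm_num
  have h160 : (((160/L : ℝ))^((1:ℝ)/2))^(2:ℕ) = 160/L := by
    rw [← Real.rpow_natCast _ 2, ← Real.rpow_mul (by positivity)]; norm_num
  have hfinal : N^2/(8*L) ≤ C^2 * (160/L) := by
    calc N^2/(8*L) = ((N^2/(8*L)) ^ ((1:ℝ)/2))^(2:ℕ) := h1.symm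
      _ ≤ (C * (160/L)^((1:ℝ)/2))^(2:ℕ) :=
          pow_le_pow_left₀ (Real.rpow_nonneg ha.le _) hreal 2
      _ = C^2 * (((160/L : ℝ))^((1:ℝ)/2))^(2:ℕ) := by ring
      _ = C^2 * (160/L) := by rw [h160]
  rw [div_le_iff₀ (by positivity)] at hfinal
  have hident : C^2 * (160/L) * (8*L) = 1280 * C^2 := by
    field_simp
    ring
  rw [hident] at hfinal
  nlinarith [hC0, sq_nonneg C]
end

section
/- Let s = 1/2 and p = 2. Then there exists a constant C > 0 such that for all sufficiently small ε ∈ (0,1/2), the squared Gagliardo seminorm of u_ε satisfies [u_ε]_{1/2,2,(0,1)}^2 = ∫_0^1 ∫_0^1 |u_ε(x) - u_ε(y)|^2 / |x-y|^2 dx dy ≤ C / |log ε|. -/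
open MeasureTheory Set Filter Topology
open scoped ENNReal

/-- The log-type cut-off functions `u_ε` on `(0,1)`. -/
noncomputable def uEps (ε : ℝ) : ℝ → ℝ := fun x =>
  if x < ε then |Real.log ε| / |Real.log x|
  else if x ≤ 1 - ε then 1
  else |Real.log ε| / |Real.log (1 - x)|

/-- The squared Gagliardo `W^{1/2,2}((0,1))` seminorm, as an extended nonnegative real. -/
noncomputable def gagSq (u : ℝ → ℝ) : ℝ≥0∞ :=
  ∫⁻ x in Ioo (0 : ℝ) 1, ∫⁻ y in Ioo (0 : ℝ) 1,
    ENNReal.ofReal (|u x - u y| ^ 2 / |x - y| ^ 2)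



lemma log_ratio_t {t : ℝ} (ht : 1 < t) :
    Real.log t ^ 2 ≤ 16 * t ^ (-(3:ℝ)/2) * (t - 1) ^ 2 := by
  have ht0 : 0 < t := by linarith
  set s : ℝ := t ^ ((4:ℝ)⁻¹) with hs_def
  have hs0 : 0 < s := Real.rpow_pos_of_pos ht0 _
  have hs1 : 1 < s := by
    rw [hs_def]
    exact (Real.one_lt_rpow_iff_of_pos ht0).2 (Or.inl ⟨ht, by norm_num⟩)
  have hs4 : s ^ (4:ℕ) = t := by
    rw [hs_def, ← Real.rpow_natCast (t ^ ((4:ℝ)⁻¹)) 4, ← Real.rpow_mul ht0.le]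
    norm_num
  have hlog : Real.log t = 4 * Real.log s := by
    rw [← hs4, Real.log_pow]; push_cast; ring
  have hts : t ^ (-(3:ℝ)/2) = (s ^ (6:ℕ))⁻¹ := by
    rw [← hs4, ← Real.rpow_natCast s 4, ← Real.rpow_mul hs0.le,
      ← Real.rpow_natCast s 6, ← Real.rpow_neg hs0.le]
    norm_num
  have hls : Real.log s ≤ s - 1 := Real.log_le_sub_one_of_pos hs0
  have hls0 : 0 ≤ Real.log s := Real.log_nonneg hs1.le
  have ha := mul_le_mul_of_nonneg_right hls (pow_pos hs0 3).le
  have hb : (1:ℝ) ≤ s ^ 3 := by nlinarith [hs1, sq_nonneg (s-1)]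
  have h1 : Real.log s * s ^ 3 ≤ s ^ 4 - 1 := by nlinarith [ha, hb]
  have h2 : (Real.log s * s ^ 3) ^ 2 ≤ (s ^ 4 - 1) ^ 2 :=
    pow_le_pow_left₀ (mul_nonneg hls0 (pow_pos hs0 3).le) h1 2
  rw [hlog, hts, ← hs4]
  have hrw : 16 * ((s ^ (6:ℕ)):ℝ)⁻¹ * ((s ^ (4:ℕ)) - 1) ^ 2
      = 16 * ((s ^ 4 - 1) ^ 2) / s ^ 6 := by ring
  rw [hrw, le_div_iff₀ (by positivity)]
  nlinarith [h2]

lemma log_ratio_sq {x y : ℝ} (hx : 0 < x) (hxy : x < y) :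
    Real.log (y / x) ^ 2 ≤ 16 * (x ^ (-(2:ℝ)⁻¹) * y ^ (-(3:ℝ)/2)) * (y - x) ^ 2 := by
  have hy : 0 < y := hx.trans hxy
  have ht : 1 < y / x := (one_lt_div hx).2 hxy
  have hmain := log_ratio_t ht
  have hx2 : x ^ (-(2:ℝ)) = ((x ^ (2:ℕ)):ℝ)⁻¹ := by
    rw [← Real.rpow_natCast x 2, ← Real.rpow_neg hx.le]
    norm_num
  have hsplit : x ^ (-(2:ℝ)⁻¹) = x ^ (-(2:ℝ)) / x ^ (-(3:ℝ)/2) := by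
    rw [← Real.rpow_sub hx]; norm_num
  have hA : x ^ (-(2:ℝ)⁻¹) * y ^ (-(3:ℝ)/2) = (y / x) ^ (-(3:ℝ)/2) * ((x ^ (2:ℕ)):ℝ)⁻¹ := by
    rw [hsplit, Real.div_rpow hy.le hx.le, ← hx2]
    ring
  have hB : (y - x) ^ 2 = (y / x - 1) ^ 2 * (x ^ (2:ℕ)) := by
    field_simp
  rw [hA, hB]
  calc Real.log (y / x) ^ 2 ≤ 16 * (y/x) ^ (-(3:ℝ)/2) * (y/x - 1) ^ 2 := hmain
    _ = 16 * ((y/x) ^ (-(3:ℝ)/2) * ((x ^ (2:ℕ)):ℝ)⁻¹) * ((y/x - 1) ^ 2 * (x ^ (2:ℕ))) := by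
        field_simp


lemma one_sub_div_le {ε x z : ℝ} (hx : 0 < x) (hxe : x < ε) (hez : ε ≤ z) (he1 : ε < 1) :
    0 ≤ 1 - (-Real.log ε) / (-Real.log x) ∧
    1 - (-Real.log ε) / (-Real.log x) ≤ Real.log (z / x) / (-Real.log x) := by
  have hx1 : x < 1 := hxe.trans he1
  have he0 : 0 < ε := hx.trans hxe
  have hl : 0 < -Real.log ε := neg_pos.2 (Real.log_neg he0 he1)
  have ha : -Real.log ε < -Real.log x := by
    have := Real.log_lt_log hx hxe; linarith
  have ha0 : 0 < -Real.log x := hl.trans ha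
  constructor
  · rw [sub_nonneg, div_le_one ha0]; linarith
  · have hlx : Real.log x ≠ 0 := ne_of_lt (by linarith)
    have h1 : 1 - (-Real.log ε) / (-Real.log x) = (Real.log ε - Real.log x) / (-Real.log x) := by
      field_simp
      ring
    rw [h1]
    gcongr
    have h2 : Real.log ε - Real.log x = Real.log (ε / x) :=
      (Real.log_div (ne_of_gt he0) (ne_of_gt hx)).symm
    rw [h2]
    apply Real.log_le_log (by positivity)
    gcongr

lemma trans_two {ε x y : ℝ} (hx : 0 < x) (hxy : x < y) (hye : y < ε) (he1 : ε < 1) :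
    0 ≤ (-Real.log ε) / (-Real.log y) - (-Real.log ε) / (-Real.log x) ∧
    (-Real.log ε) / (-Real.log y) - (-Real.log ε) / (-Real.log x)
      ≤ Real.log (y / x) / (-Real.log x) := by
  have hy0 : 0 < y := hx.trans hxy
  have he0 : 0 < ε := hy0.trans hye
  have hl : 0 < -Real.log ε := neg_pos.2 (Real.log_neg he0 he1)
  have hb : -Real.log ε < -Real.log y := by
    have := Real.log_lt_log hy0 hye; linarith
  have hab : -Real.log y < -Real.log x := by
    have := Real.log_lt_log hx hxy; linarith
  have hb0 : 0 < -Real.log y := hl.trans hb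
  have ha0 : 0 < -Real.log x := hb0.trans hab
  have hlyx : Real.log (y / x) = (-Real.log x) - (-Real.log y) := by
    rw [Real.log_div (ne_of_gt hy0) (ne_of_gt hx)]; ring
  constructor
  · rw [sub_nonneg]
    gcongr
  · have key : (-Real.log ε) * ((-Real.log x) * ((-Real.log x) - (-Real.log y)))
        ≤ (-Real.log y) * ((-Real.log x) * ((-Real.log x) - (-Real.log y))) :=
      mul_le_mul_of_nonneg_right hb.le (mul_nonneg ha0.le (by linarith))
    rw [hlyx, div_sub_div _ _ (ne_of_gt hb0) (ne_of_gt ha0),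
      div_le_div_iff₀ (by positivity) ha0]
    nlinarith [key]

lemma uEps_val {ε t : ℝ} (he0 : 0 < ε) (he1 : ε < 1) (ht : t ∈ Ioo (0:ℝ) 1) :
    uEps ε t = if t < ε then (-Real.log ε) / (-Real.log t)
      else if t ≤ 1 - ε then 1 else (-Real.log ε) / (-Real.log (1-t)) := by
  unfold uEps
  have hle : |Real.log ε| = -Real.log ε := abs_of_neg (Real.log_neg he0 he1)
  by_cases h1 : t < ε
  · rw [if_pos h1, if_pos h1, hle, abs_of_neg (Real.log_neg ht.1 ht.2)]
  · rw [if_neg h1, if_neg h1]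
    by_cases h2 : t ≤ 1 - ε
    · rw [if_pos h2, if_pos h2]
    · rw [if_neg h2, if_neg h2, hle,
        abs_of_neg (Real.log_neg (by linarith [ht.2] : (0:ℝ) < 1 - t) (by linarith [ht.1]))]

lemma uEps_abs_diff_le {ε x y : ℝ} (hε : ε ∈ Ioo (0:ℝ) (1/2)) (hx : x ∈ Ioo (0:ℝ) 1)
    (hy : y ∈ Ioo (0:ℝ) 1) (hxy : x < y) :
    |uEps ε x - uEps ε y| ≤
      (if x < ε then Real.log (y/x) / (-Real.log x) else 0)
      + (if 1 - ε < y then Real.log ((1-x)/(1-y)) / (-Real.log (1-y)) else 0) := by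
  obtain ⟨hx0, hx1⟩ := hx
  obtain ⟨hy0, hy1⟩ := hy
  obtain ⟨he0, he2⟩ := hε
  have he1 : ε < 1 := by linarith
  have heh : ε < 1 - ε := by linarith
  rw [uEps_val he0 he1 ⟨hx0, hx1⟩, uEps_val he0 he1 ⟨hy0, hy1⟩]
  by_cases h1 : x < ε
  · rw [if_pos h1, if_pos h1]
    by_cases h2 : y < ε
    · rw [if_pos h2, if_neg (by linarith : ¬ 1 - ε < y)]
      obtain ⟨t0, t1⟩ := trans_two hx0 hxy h2 he1
      rw [abs_sub_comm, abs_of_nonneg t0]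
      linarith
    · rw [if_neg h2]
      by_cases h3 : y ≤ 1 - ε
      · rw [if_pos h3, if_neg (by linarith : ¬ 1 - ε < y)]
        obtain ⟨s0, s1⟩ := one_sub_div_le hx0 h1 (not_lt.1 h2) he1
        rw [abs_sub_comm, abs_of_nonneg s0]
        linarith
      · rw [if_neg h3, if_pos (by linarith : 1 - ε < y)]
        obtain ⟨s0, s1⟩ := one_sub_div_le hx0 h1 (by linarith : ε ≤ y) he1
        obtain ⟨u0, u1⟩ := one_sub_div_le (by linarith : (0:ℝ) < 1 - y)
          (by linarith : 1 - y < ε) (by linarith : ε ≤ 1 - x) he1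
        rw [abs_sub_le_iff]
        constructor <;> linarith
  · rw [if_neg h1, if_neg (by linarith : ¬ x < ε), zero_add]
    by_cases h2 : x ≤ 1 - ε
    · rw [if_pos h2]
      by_cases h3 : y ≤ 1 - ε
      · rw [if_neg (by linarith : ¬ y < ε), if_pos h3, if_neg (by linarith : ¬ 1 - ε < y)]
        simp
      · rw [if_neg (by linarith : ¬ y < ε), if_neg h3, if_pos (by linarith : 1 - ε < y)]
        obtain ⟨u0, u1⟩ := one_sub_div_le (by linarith : (0:ℝ) < 1 - y)
          (by linarith : 1 - y < ε) (by linarith : ε ≤ 1 - x) he1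
        rw [abs_of_nonneg u0]
        linarith
    · rw [if_neg h2, if_neg (by linarith : ¬ y < ε), if_neg (by linarith : ¬ y ≤ 1 - ε),
        if_pos (by linarith : 1 - ε < y)]
      obtain ⟨t0, t1⟩ := trans_two (by linarith : (0:ℝ) < 1 - y) (by linarith : 1 - y < 1 - x)
        (by linarith : 1 - x < ε) he1
      rw [abs_of_nonneg t0]
      linarith

noncomputable def Pf (ε x : ℝ) : ℝ :=
  if x < ε then 16 * x ^ (-(2:ℝ)⁻¹) / Real.log x ^ 2 else 0

noncomputable def Qf (y : ℝ) : ℝ := y ^ (-(3:ℝ)/2)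

noncomputable def F1 (ε x y : ℝ) : ℝ≥0∞ :=
  if x < y then ENNReal.ofReal (2 * Pf ε x * Qf y) else 0


lemma pointwise_sq {ε x y : ℝ} (hε : ε ∈ Ioo (0:ℝ) (1/2)) (hx : x ∈ Ioo (0:ℝ) 1)
    (hy : y ∈ Ioo (0:ℝ) 1) (hxy : x < y) :
    |uEps ε x - uEps ε y| ^ 2 / |x - y| ^ 2 ≤
      2 * Pf ε x * Qf y + 2 * Pf ε (1-y) * Qf (1-x) := by
  have hd := uEps_abs_diff_le hε hx hy hxy
  set d1 := (if x < ε then Real.log (y/x) / (-Real.log x) else 0) with hd1def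
  set d2 := (if 1 - ε < y then Real.log ((1-x)/(1-y)) / (-Real.log (1-y)) else 0) with hd2def
  have hlx : Real.log x < 0 := Real.log_neg hx.1 hx.2
  have hly' : Real.log (1-y) < 0 := Real.log_neg (by linarith [hy.2]) (by linarith [hy.1])
  have hd1n : 0 ≤ d1 := by
    rw [hd1def]; split
    · apply div_nonneg (Real.log_nonneg ((one_le_div hx.1).2 hxy.le)) (by linarith)
    · exact le_refl 0
  have hd2n : 0 ≤ d2 := by
    rw [hd2def]; split
    · apply div_nonneg (Real.log_nonneg ((one_le_div (by linarith [hy.2] : (0:ℝ) < 1 - y)).2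
        (by linarith))) (by linarith)
    · exact le_refl 0
  have h1 : d1 ^ 2 ≤ Pf ε x * Qf y * (y - x) ^ 2 := by
    rw [hd1def]
    unfold Pf
    by_cases h : x < ε
    · rw [if_pos h, if_pos h]
      have hkey := log_ratio_sq hx.1 hxy
      have hrw : 16 * x ^ (-(2:ℝ)⁻¹) / Real.log x ^ 2 * Qf y * (y-x)^2
          = (16 * (x ^ (-(2:ℝ)⁻¹) * Qf y) * (y-x)^2) / Real.log x ^ 2 := by
        unfold Qf; ring
      rw [div_pow, neg_sq, hrw]
      gcongr
      exact hkey
    · rw [if_neg h, if_neg h]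
      simp
  have h2 : d2 ^ 2 ≤ Pf ε (1-y) * Qf (1-x) * (y - x) ^ 2 := by
    rw [hd2def]
    unfold Pf
    by_cases h : 1 - ε < y
    · rw [if_pos h, if_pos (by linarith : 1 - y < ε)]
      have hkey := log_ratio_sq (by linarith [hy.2] : (0:ℝ) < 1 - y)
        (by linarith : 1 - y < 1 - x)
      have hyx : ((1-x) - (1-y)) ^ 2 = (y - x) ^ 2 := by ring
      rw [hyx] at hkey
      have hrw : 16 * (1-y) ^ (-(2:ℝ)⁻¹) / Real.log (1-y) ^ 2 * Qf (1-x) * (y-x)^2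
          = (16 * ((1-y) ^ (-(2:ℝ)⁻¹) * Qf (1-x)) * (y-x)^2) / Real.log (1-y) ^ 2 := by
        unfold Qf; ring
      rw [div_pow, neg_sq, hrw]
      gcongr
      exact hkey
    · rw [if_neg h, if_neg (by linarith : ¬ 1 - y < ε)]
      simp
  have habs : |x - y| = y - x := by rw [abs_sub_comm, abs_of_pos (sub_pos.2 hxy)]
  rw [habs, div_le_iff₀ (pow_pos (sub_pos.2 hxy) 2)]
  have habs2 : |uEps ε x - uEps ε y| ^ 2 ≤ (d1 + d2) ^ 2 :=
    pow_le_pow_left₀ (abs_nonneg _) hd 2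
  nlinarith [h1, h2, habs2, hd1n, hd2n, sq_nonneg (d1 - d2)]

lemma pointwise_enn {ε x y : ℝ} (hε : ε ∈ Ioo (0:ℝ) (1/2)) (hx : x ∈ Ioo (0:ℝ) 1)
    (hy : y ∈ Ioo (0:ℝ) 1) :
    ENNReal.ofReal (|uEps ε x - uEps ε y| ^ 2 / |x - y| ^ 2) ≤
      F1 ε x y + F1 ε (1-y) (1-x) + F1 ε y x + F1 ε (1-x) (1-y) := by
  rcases lt_trichotomy x y with h | h | h
  · have hp := pointwise_sq hε hx hy h
    calc ENNReal.ofReal (|uEps ε x - uEps ε y| ^ 2 / |x - y| ^ 2)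
        ≤ ENNReal.ofReal (2 * Pf ε x * Qf y + 2 * Pf ε (1-y) * Qf (1-x)) :=
          ENNReal.ofReal_le_ofReal hp
      _ ≤ ENNReal.ofReal (2 * Pf ε x * Qf y) + ENNReal.ofReal (2 * Pf ε (1-y) * Qf (1-x)) :=
          ENNReal.ofReal_add_le
      _ = F1 ε x y + F1 ε (1-y) (1-x) := by
          rw [F1, if_pos h, F1, if_pos (by linarith : 1 - y < 1 - x)]
      _ ≤ F1 ε x y + F1 ε (1-y) (1-x) + F1 ε y x + F1 ε (1-x) (1-y) :=
          le_trans (self_le_add_right _ _) (self_le_add_right _ _)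
  · subst h
    simp
  · have hp := pointwise_sq hε hy hx h
    rw [abs_sub_comm (uEps ε x) (uEps ε y), abs_sub_comm x y]
    calc ENNReal.ofReal (|uEps ε y - uEps ε x| ^ 2 / |y - x| ^ 2)
        ≤ ENNReal.ofReal (2 * Pf ε y * Qf x + 2 * Pf ε (1-x) * Qf (1-y)) :=
          ENNReal.ofReal_le_ofReal hp
      _ ≤ ENNReal.ofReal (2 * Pf ε y * Qf x) + ENNReal.ofReal (2 * Pf ε (1-x) * Qf (1-y)) :=
          ENNReal.ofReal_add_le
      _ = F1 ε y x + F1 ε (1-x) (1-y) := by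
          rw [F1, if_pos h, F1, if_pos (by linarith : 1 - x < 1 - y)]
      _ ≤ F1 ε x y + F1 ε (1-y) (1-x) + (F1 ε y x + F1 ε (1-x) (1-y)) := le_add_self
      _ = F1 ε x y + F1 ε (1-y) (1-x) + F1 ε y x + F1 ε (1-x) (1-y) := by ring

lemma measurable_Pf (ε : ℝ) : Measurable (Pf ε) := by
  unfold Pf
  exact Measurable.ite measurableSet_Iio
    ((measurable_const.mul (measurable_id.pow_const _)).div
      (Real.measurable_log.pow_const 2)) measurable_const

lemma measurable_Qf : Measurable Qf := by unfold Qf; fun_prop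

lemma measurable_F1 (ε : ℝ) : Measurable (Function.uncurry (F1 ε)) := by
  have : Function.uncurry (F1 ε) = fun p : ℝ × ℝ =>
      if p.1 < p.2 then ENNReal.ofReal (2 * Pf ε p.1 * Qf p.2) else 0 := rfl
  rw [this]
  apply Measurable.ite (measurableSet_lt measurable_fst measurable_snd) ?_ measurable_const
  apply ENNReal.measurable_ofReal.comp
  exact (measurable_const.mul ((measurable_Pf ε).comp measurable_fst)).mul
    (measurable_Qf.comp measurable_snd)

lemma lint_Q {x : ℝ} (hx : 0 < x) :
    ∫⁻ y in Ioo x 1, ENNReal.ofReal (Qf y) ≤ ENNReal.ofReal (2 * x ^ (-(2:ℝ)⁻¹)) := by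
  rcases le_or_gt 1 x with h | h
  · rw [Ioo_eq_empty (by exact fun hc => absurd h (not_le.2 hc) : ¬ x < 1),
      Measure.restrict_empty, lintegral_zero_measure]
    exact bot_le
  · have hcont : ContinuousOn (fun y : ℝ => y ^ (-(3:ℝ)/2)) (Icc x 1) := by
      apply ContinuousOn.rpow_const continuousOn_id
      intro t ht
      exact Or.inl (ne_of_gt (lt_of_lt_of_le hx ht.1))
    have hint : IntegrableOn (fun y : ℝ => Qf y) (Ioo x 1) :=
      (hcont.integrableOn_Icc).mono_set Ioo_subset_Icc_self
    rw [← ofReal_integral_eq_lintegral_ofReal hint ?_]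
    swap
    · filter_upwards [ae_restrict_mem measurableSet_Ioo] with t ht
      exact Real.rpow_nonneg (le_of_lt (hx.trans ht.1)) _
    apply ENNReal.ofReal_le_ofReal
    have heq : ∫ y in Ioo x 1, Qf y = ∫ y in x..1, y ^ (-(3:ℝ)/2) := by
      rw [intervalIntegral.integral_of_le h.le, integral_Ioc_eq_integral_Ioo]
      rfl
    rw [heq, integral_rpow (Or.inr ⟨by norm_num, by
      rw [Set.uIcc_of_le h.le]
      exact fun hc => absurd hc.1 (not_le.2 hx)⟩)]
    have h1 : (-(3:ℝ)/2 + 1) = -(2:ℝ)⁻¹ := by norm_num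
    rw [h1, Real.one_rpow]
    have hx2 : 1 ≤ x ^ (-(2:ℝ)⁻¹) :=
      Real.one_le_rpow_of_pos_of_le_one_of_nonpos hx h.le (by norm_num)
    have : (1 - x ^ (-(2:ℝ)⁻¹)) / (-(2:ℝ)⁻¹) = 2 * x ^ (-(2:ℝ)⁻¹) - 2 := by
      field_simp
      ring
    rw [this]
    linarith

lemma lint_P_log {ε : ℝ} (he0 : 0 < ε) (he1 : ε < 1) :
    ∫⁻ x in Ioo (0:ℝ) ε, ENNReal.ofReal (64 / (x * Real.log x ^ 2))
      ≤ ENNReal.ofReal (64 / (-Real.log ε)) := by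
  have hlε : Real.log ε < 0 := Real.log_neg he0 he1
  have hper : ∀ δ : ℝ, 0 < δ → δ < ε →
      ∫⁻ x in Ioo δ ε, ENNReal.ofReal (64 / (x * Real.log x ^ 2))
        ≤ ENNReal.ofReal (64 / (-Real.log ε)) := by
    intro δ hδ0 hδε
    have hδ1 : δ < 1 := hδε.trans he1
    have hlδ : Real.log δ < 0 := Real.log_neg hδ0 hδ1
    have hsub : Icc δ ε ⊆ {(0:ℝ)}ᶜ := by
      intro t ht
      simp only [mem_compl_iff, mem_singleton_iff]
      nlinarith [ht.1]
    have hlogne : ∀ t ∈ Icc δ ε, t * Real.log t ^ 2 ≠ 0 := by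
      intro t ht
      have ht0 : 0 < t := lt_of_lt_of_le hδ0 ht.1
      have hlt : Real.log t < 0 := Real.log_neg ht0 (lt_of_le_of_lt ht.2 he1)
      exact ne_of_gt (mul_pos ht0 (pow_two_pos_of_ne_zero (ne_of_lt hlt)))
    have hcont : ContinuousOn (fun x : ℝ => 64 / (x * Real.log x ^ 2)) (Icc δ ε) := by
      apply ContinuousOn.div continuousOn_const
      · exact continuousOn_id.mul ((Real.continuousOn_log.mono hsub).pow 2)
      · exact hlogne
    have hint : IntegrableOn (fun x : ℝ => 64 / (x * Real.log x ^ 2)) (Ioo δ ε) :=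
      (hcont.integrableOn_Icc).mono_set Ioo_subset_Icc_self
    rw [← ofReal_integral_eq_lintegral_ofReal hint ?_]
    swap
    · filter_upwards [ae_restrict_mem measurableSet_Ioo] with t ht
      have ht0 : 0 < t := lt_trans hδ0 ht.1
      have hlt : Real.log t < 0 := Real.log_neg ht0 (ht.2.trans he1)
      positivity
    apply ENNReal.ofReal_le_ofReal
    have heq : ∫ x in Ioo δ ε, 64 / (x * Real.log x ^ 2)
        = ∫ x in δ..ε, 64 / (x * Real.log x ^ 2) := by
      rw [intervalIntegral.integral_of_le hδε.le, integral_Ioc_eq_integral_Ioo]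
    rw [heq]
    have hderiv : ∀ t ∈ uIcc δ ε, HasDerivAt (fun u : ℝ => 64 * (-(Real.log u)⁻¹))
        (64 / (t * Real.log t ^ 2)) t := by
      intro t ht
      rw [uIcc_of_le hδε.le] at ht
      have ht0 : 0 < t := lt_of_lt_of_le hδ0 ht.1
      have hlt : Real.log t < 0 := Real.log_neg ht0 (lt_of_le_of_lt ht.2 he1)
      have h1 : HasDerivAt Real.log t⁻¹ t := Real.hasDerivAt_log (ne_of_gt ht0)
      have h2 := (h1.inv (ne_of_lt hlt)).neg.const_mul (64:ℝ)
      refine h2.congr_deriv ?_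
      ring
    rw [intervalIntegral.integral_eq_sub_of_hasDerivAt hderiv
      ((by rw [uIcc_of_le hδε.le]; exact hcont :
        ContinuousOn (fun x : ℝ => 64 / (x * Real.log x ^ 2)) (uIcc δ ε)).intervalIntegrable)]
    have hδinv : (Real.log δ)⁻¹ < 0 := inv_lt_zero.2 hlδ
    rw [div_eq_mul_inv, inv_neg]
    linarith
  set g : ℝ → ℝ≥0∞ := fun x => ENNReal.ofReal (64 / (x * Real.log x ^ 2)) with hg
  have hgm : Measurable g := by
    apply ENNReal.measurable_ofReal.comp
    exact measurable_const.div (measurable_id.mul (Real.measurable_log.pow_const 2))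
  have hU : (⋃ n : ℕ, Ioo (ε / ((n:ℝ) + 2)) ε) = Ioo 0 ε := by
    ext t
    simp only [mem_iUnion, mem_Ioo]
    constructor
    · rintro ⟨n, h1, h2⟩
      have : (0:ℝ) < ε / ((n:ℝ) + 2) := by positivity
      exact ⟨lt_trans this h1, h2⟩
    · rintro ⟨h1, h2⟩
      obtain ⟨n, hn⟩ := exists_nat_gt (ε / t)
      refine ⟨n, ?_, h2⟩
      rw [div_lt_iff₀ (by positivity)]
      rw [div_lt_iff₀ h1] at hn
      nlinarith [h1]
  have hmono : Monotone (fun n : ℕ => Ioo (ε / ((n:ℝ) + 2)) ε) := by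
    intro m n hmn
    apply Ioo_subset_Ioo_left
    have h2 : ((m:ℝ) + 2) ≤ ((n:ℝ) + 2) := by
      have := (Nat.cast_le (α := ℝ)).2 hmn
      linarith
    exact div_le_div_of_nonneg_left he0.le (by positivity) h2
  calc ∫⁻ x in Ioo (0:ℝ) ε, g x = (volume.withDensity g) (Ioo 0 ε) :=
        (withDensity_apply g measurableSet_Ioo).symm
    _ = (volume.withDensity g) (⋃ n : ℕ, Ioo (ε / ((n:ℝ) + 2)) ε) := by rw [hU]
    _ = ⨆ n : ℕ, (volume.withDensity g) (Ioo (ε / ((n:ℝ) + 2)) ε) := hmono.measure_iUnion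
    _ ≤ ENNReal.ofReal (64 / (-Real.log ε)) := by
        apply iSup_le
        intro n
        rw [withDensity_apply g measurableSet_Ioo]
        refine hper _ (by positivity) (div_lt_self he0 ?_)
        have : (0:ℝ) ≤ (n:ℝ) := Nat.cast_nonneg n
        linarith

lemma F1_inner {ε x : ℝ} (hx : x ∈ Ioo (0:ℝ) 1) :
    ∫⁻ y in Ioo (0:ℝ) 1, F1 ε x y
      ≤ ENNReal.ofReal (if x < ε then 64 / (x * Real.log x ^ 2) else 0) := by
  have hPnn : 0 ≤ Pf ε x := by
    unfold Pf
    split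
    · exact div_nonneg (mul_nonneg (by norm_num) (Real.rpow_nonneg hx.1.le _)) (by positivity)
    · exact le_refl 0
  have hiso : ∀ y : ℝ, F1 ε x y
      = (Ioi x).indicator (fun y => ENNReal.ofReal (2 * Pf ε x * Qf y)) y := by
    intro y
    unfold F1
    by_cases h : x < y
    · rw [if_pos h, indicator_of_mem (mem_Ioi.2 h)]
    · rw [if_neg h, indicator_of_notMem (by simpa using h)]
  simp_rw [hiso]
  rw [lintegral_indicator measurableSet_Ioi, Measure.restrict_restrict measurableSet_Ioi]
  have hset : Ioi x ∩ Ioo (0:ℝ) 1 = Ioo x 1 := by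
    ext t
    simp only [mem_inter_iff, mem_Ioi, mem_Ioo]
    constructor
    · rintro ⟨h1, _, h3⟩; exact ⟨h1, h3⟩
    · rintro ⟨h1, h2⟩; exact ⟨h1, hx.1.trans h1, h2⟩
  rw [hset]
  have hmul : ∀ y : ℝ, ENNReal.ofReal (2 * Pf ε x * Qf y)
      = ENNReal.ofReal (2 * Pf ε x) * ENNReal.ofReal (Qf y) := fun y =>
    ENNReal.ofReal_mul (by linarith)
  simp_rw [hmul]
  have hq : Measurable fun y : ℝ => ENNReal.ofReal (Qf y) :=
    ENNReal.measurable_ofReal.comp measurable_Qf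
  rw [lintegral_const_mul _ hq]
  calc ENNReal.ofReal (2 * Pf ε x) * ∫⁻ y in Ioo x 1, ENNReal.ofReal (Qf y)
      ≤ ENNReal.ofReal (2 * Pf ε x) * ENNReal.ofReal (2 * x ^ (-(2:ℝ)⁻¹)) :=
        mul_le_mul_right (lint_Q hx.1) _
    _ = ENNReal.ofReal ((2 * Pf ε x) * (2 * x ^ (-(2:ℝ)⁻¹))) :=
        (ENNReal.ofReal_mul (by linarith)).symm
    _ ≤ ENNReal.ofReal (if x < ε then 64 / (x * Real.log x ^ 2) else 0) := by
        apply ENNReal.ofReal_le_ofReal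
        unfold Pf
        by_cases h : x < ε
        · rw [if_pos h, if_pos h]
          have hxx : x ^ (-(2:ℝ)⁻¹) * x ^ (-(2:ℝ)⁻¹) = x⁻¹ := by
            rw [← Real.rpow_add hx.1]
            have : (-(2:ℝ)⁻¹ + -(2:ℝ)⁻¹) = (-1 : ℝ) := by norm_num
            rw [this, Real.rpow_neg hx.1.le, Real.rpow_one]
          calc 2 * (16 * x ^ (-(2:ℝ)⁻¹) / Real.log x ^ 2) * (2 * x ^ (-(2:ℝ)⁻¹))
              = 64 * (x ^ (-(2:ℝ)⁻¹) * x ^ (-(2:ℝ)⁻¹)) / Real.log x ^ 2 := by ring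
            _ = 64 * x⁻¹ / Real.log x ^ 2 := by rw [hxx]
            _ = 64 / (x * Real.log x ^ 2) := by
                rw [mul_comm 64 x⁻¹, ← div_eq_inv_mul, div_div]
            _ ≤ 64 / (x * Real.log x ^ 2) := le_refl _
        · rw [if_neg h, if_neg h]
          simp

lemma F1_double {ε : ℝ} (hε : ε ∈ Ioo (0:ℝ) (1/2)) :
    ∫⁻ x in Ioo (0:ℝ) 1, ∫⁻ y in Ioo (0:ℝ) 1, F1 ε x y
      ≤ ENNReal.ofReal (64 / (-Real.log ε)) := by
  have he1 : ε < 1 := lt_trans hε.2 (by norm_num)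
  calc ∫⁻ x in Ioo (0:ℝ) 1, ∫⁻ y in Ioo (0:ℝ) 1, F1 ε x y
      ≤ ∫⁻ x in Ioo (0:ℝ) 1,
          ENNReal.ofReal (if x < ε then 64 / (x * Real.log x ^ 2) else 0) :=
        setLIntegral_mono' measurableSet_Ioo (fun x hx => F1_inner hx)
    _ = ∫⁻ x in Ioo (0:ℝ) ε, ENNReal.ofReal (64 / (x * Real.log x ^ 2)) := by
        have hind : ∀ x : ℝ, ENNReal.ofReal (if x < ε then 64 / (x * Real.log x ^ 2) else 0)
            = (Iio ε).indicator (fun x => ENNReal.ofReal (64 / (x * Real.log x ^ 2))) x := by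
          intro x
          by_cases h : x < ε
          · rw [if_pos h, indicator_of_mem (mem_Iio.2 h)]
          · rw [if_neg h, indicator_of_notMem (by simpa using h), ENNReal.ofReal_zero]
        simp_rw [hind]
        rw [lintegral_indicator measurableSet_Iio, Measure.restrict_restrict measurableSet_Iio]
        have hseteq : Iio ε ∩ Ioo (0:ℝ) 1 = Ioo (0:ℝ) ε := by
          ext t
          simp only [mem_inter_iff, mem_Iio, mem_Ioo]
          constructor
          · rintro ⟨h1, h2, _⟩; exact ⟨h2, h1⟩
          · rintro ⟨h1, h2⟩; exact ⟨h2, h1, h2.trans he1⟩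
        rw [hseteq]
    _ ≤ ENNReal.ofReal (64 / (-Real.log ε)) := lint_P_log hε.1 he1

lemma lint_reflect (f : ℝ → ℝ≥0∞) (hf : Measurable f) :
    ∫⁻ x in Ioo (0:ℝ) 1, f (1 - x) = ∫⁻ x in Ioo (0:ℝ) 1, f x := by
  have hmp : MeasurePreserving (fun x : ℝ => 1 - x) volume volume :=
    Measure.measurePreserving_sub_left volume 1
  have hpre : (fun x : ℝ => 1 - x) ⁻¹' Ioo (0:ℝ) 1 = Ioo (0:ℝ) 1 := by
    ext t
    simp only [mem_preimage, mem_Ioo]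
    constructor <;> (intro h; constructor <;> linarith [h.1, h.2])
  rw [← hmp.setLIntegral_comp_preimage measurableSet_Ioo hf, hpre]

lemma lint_swap (f : ℝ → ℝ → ℝ≥0∞) (hf : Measurable (Function.uncurry f)) :
    ∫⁻ x in Ioo (0:ℝ) 1, ∫⁻ y in Ioo (0:ℝ) 1, f y x
      = ∫⁻ x in Ioo (0:ℝ) 1, ∫⁻ y in Ioo (0:ℝ) 1, f x y :=
  lintegral_lintegral_swap (hf.comp measurable_swap).aemeasurable

/-- Upper bound: for all sufficiently small `ε ∈ (0,1/2)`,
`[u_ε]_{1/2,2,(0,1)}^2 ≤ C / |log ε|`. -/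
theorem uEps_gagliardo_sq_upper_bound :
    ∃ C > 0, ∀ᶠ ε in 𝓝[>] (0 : ℝ), ε ∈ Ioo (0 : ℝ) (1 / 2) ∧
      gagSq (uEps ε) ≤ ENNReal.ofReal (C / |Real.log ε|) := by
  refine ⟨256, by norm_num, ?_⟩
  filter_upwards [Ioo_mem_nhdsGT (by norm_num : (0:ℝ) < 1/2)] with ε hε
  refine ⟨hε, ?_⟩
  obtain ⟨he0, he2⟩ := hε
  have he1 : ε < 1 := by linarith
  have hlabs : |Real.log ε| = -Real.log ε := abs_of_neg (Real.log_neg he0 he1)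
  have hL : 0 < -Real.log ε := neg_pos.2 (Real.log_neg he0 he1)
  have hF1m : Measurable (Function.uncurry (F1 ε)) := measurable_F1 ε
  have hsec : ∀ x : ℝ, Measurable (fun y => F1 ε x y) :=
    fun x => hF1m.comp (measurable_const.prodMk measurable_id)
  have hsec2 : ∀ x : ℝ, Measurable (fun y => F1 ε (1-y) (1-x)) :=
    fun x => hF1m.comp ((measurable_const.sub measurable_id).prodMk measurable_const)
  have hsec3 : ∀ x : ℝ, Measurable (fun y => F1 ε y x) :=
    fun x => hF1m.comp (measurable_id.prodMk measurable_const)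
  have hsec4 : ∀ x : ℝ, Measurable (fun y => F1 ε (1-x) (1-y)) :=
    fun x => hF1m.comp (measurable_const.prodMk (measurable_const.sub measurable_id))
  have hG2m : Measurable (Function.uncurry fun x y : ℝ => F1 ε (1-y) (1-x)) :=
    hF1m.comp ((measurable_const.sub measurable_snd).prodMk (measurable_const.sub measurable_fst))
  have hG3m : Measurable (Function.uncurry fun x y : ℝ => F1 ε y x) :=
    hF1m.comp measurable_swap
  have hG4m : Measurable (Function.uncurry fun x y : ℝ => F1 ε (1-x) (1-y)) :=
    hF1m.comp ((measurable_const.sub measurable_fst).prodMk (measurable_const.sub measurable_snd))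
  have step1 : gagSq (uEps ε) ≤
      (∫⁻ x in Ioo (0:ℝ) 1, ∫⁻ y in Ioo (0:ℝ) 1, F1 ε x y)
        + (∫⁻ x in Ioo (0:ℝ) 1, ∫⁻ y in Ioo (0:ℝ) 1, F1 ε (1-y) (1-x))
        + (∫⁻ x in Ioo (0:ℝ) 1, ∫⁻ y in Ioo (0:ℝ) 1, F1 ε y x)
        + (∫⁻ x in Ioo (0:ℝ) 1, ∫⁻ y in Ioo (0:ℝ) 1, F1 ε (1-x) (1-y)) := by
    unfold gagSq
    have hinner : ∀ x ∈ Ioo (0:ℝ) 1,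
        ∫⁻ y in Ioo (0:ℝ) 1, ENNReal.ofReal (|uEps ε x - uEps ε y| ^ 2 / |x - y| ^ 2)
        ≤ (∫⁻ y in Ioo (0:ℝ) 1, F1 ε x y) + (∫⁻ y in Ioo (0:ℝ) 1, F1 ε (1-y) (1-x))
          + (∫⁻ y in Ioo (0:ℝ) 1, F1 ε y x) + (∫⁻ y in Ioo (0:ℝ) 1, F1 ε (1-x) (1-y)) := by
      intro x hx
      calc ∫⁻ y in Ioo (0:ℝ) 1, ENNReal.ofReal (|uEps ε x - uEps ε y| ^ 2 / |x - y| ^ 2)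
          ≤ ∫⁻ y in Ioo (0:ℝ) 1,
              (F1 ε x y + F1 ε (1-y) (1-x) + F1 ε y x + F1 ε (1-x) (1-y)) :=
            setLIntegral_mono' measurableSet_Ioo
              (fun y hy => pointwise_enn ⟨he0, he2⟩ hx hy)
        _ = _ := by
            rw [lintegral_add_left (f := fun y => F1 ε x y + F1 ε (1-y) (1-x) + F1 ε y x)
                (((hsec x).add (hsec2 x)).add (hsec3 x)),
              lintegral_add_left (f := fun y => F1 ε x y + F1 ε (1-y) (1-x)) ((hsec x).add (hsec2 x)),
              lintegral_add_left (hsec x)]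
    calc ∫⁻ x in Ioo (0:ℝ) 1, ∫⁻ y in Ioo (0:ℝ) 1,
          ENNReal.ofReal (|uEps ε x - uEps ε y| ^ 2 / |x - y| ^ 2)
        ≤ ∫⁻ x in Ioo (0:ℝ) 1, ((∫⁻ y in Ioo (0:ℝ) 1, F1 ε x y)
            + (∫⁻ y in Ioo (0:ℝ) 1, F1 ε (1-y) (1-x))
            + (∫⁻ y in Ioo (0:ℝ) 1, F1 ε y x)
            + (∫⁻ y in Ioo (0:ℝ) 1, F1 ε (1-x) (1-y))) :=
          setLIntegral_mono' measurableSet_Ioo hinner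
      _ = _ := by
          have m1 : Measurable (fun x => ∫⁻ y in Ioo (0:ℝ) 1, F1 ε x y) :=
            Measurable.lintegral_prod_right' (f := fun p : ℝ × ℝ => F1 ε p.1 p.2) hF1m
          have m2 : Measurable (fun x => ∫⁻ y in Ioo (0:ℝ) 1, F1 ε (1-y) (1-x)) :=
            Measurable.lintegral_prod_right' (f := fun p : ℝ × ℝ => F1 ε (1-p.2) (1-p.1)) hG2m
          have m3 : Measurable (fun x => ∫⁻ y in Ioo (0:ℝ) 1, F1 ε y x) :=
            Measurable.lintegral_prod_right' (f := fun p : ℝ × ℝ => F1 ε p.2 p.1) hG3m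
          rw [lintegral_add_left (f := fun x => (∫⁻ y in Ioo (0:ℝ) 1, F1 ε x y)
                + (∫⁻ y in Ioo (0:ℝ) 1, F1 ε (1-y) (1-x)) + (∫⁻ y in Ioo (0:ℝ) 1, F1 ε y x))
                ((m1.add m2).add m3),
            lintegral_add_left (f := fun x => (∫⁻ y in Ioo (0:ℝ) 1, F1 ε x y)
                + (∫⁻ y in Ioo (0:ℝ) 1, F1 ε (1-y) (1-x))) (m1.add m2), lintegral_add_left m1]
  have e3 : (∫⁻ x in Ioo (0:ℝ) 1, ∫⁻ y in Ioo (0:ℝ) 1, F1 ε y x)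
      = ∫⁻ x in Ioo (0:ℝ) 1, ∫⁻ y in Ioo (0:ℝ) 1, F1 ε x y :=
    lint_swap (F1 ε) hF1m
  have e2 : (∫⁻ x in Ioo (0:ℝ) 1, ∫⁻ y in Ioo (0:ℝ) 1, F1 ε (1-y) (1-x))
      = ∫⁻ x in Ioo (0:ℝ) 1, ∫⁻ y in Ioo (0:ℝ) 1, F1 ε x y := by
    have h1 : ∀ x : ℝ, (∫⁻ y in Ioo (0:ℝ) 1, F1 ε (1-y) (1-x))
        = ∫⁻ z in Ioo (0:ℝ) 1, F1 ε z (1-x) :=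
      fun x => lint_reflect (fun z => F1 ε z (1-x))
        (hF1m.comp (measurable_id.prodMk measurable_const))
    calc ∫⁻ x in Ioo (0:ℝ) 1, ∫⁻ y in Ioo (0:ℝ) 1, F1 ε (1-y) (1-x)
        = ∫⁻ x in Ioo (0:ℝ) 1, ∫⁻ z in Ioo (0:ℝ) 1, F1 ε z (1-x) :=
          lintegral_congr (fun x => h1 x)
      _ = ∫⁻ c in Ioo (0:ℝ) 1, ∫⁻ z in Ioo (0:ℝ) 1, F1 ε z c :=
          lint_reflect (fun c => ∫⁻ z in Ioo (0:ℝ) 1, F1 ε z c)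
            (Measurable.lintegral_prod_right' (f := fun p : ℝ × ℝ => F1 ε p.2 p.1) (hF1m.comp measurable_swap))
      _ = ∫⁻ x in Ioo (0:ℝ) 1, ∫⁻ y in Ioo (0:ℝ) 1, F1 ε x y := lint_swap (F1 ε) hF1m
  have e4 : (∫⁻ x in Ioo (0:ℝ) 1, ∫⁻ y in Ioo (0:ℝ) 1, F1 ε (1-x) (1-y))
      = ∫⁻ x in Ioo (0:ℝ) 1, ∫⁻ y in Ioo (0:ℝ) 1, F1 ε x y := by
    calc ∫⁻ x in Ioo (0:ℝ) 1, ∫⁻ y in Ioo (0:ℝ) 1, F1 ε (1-x) (1-y)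
        = ∫⁻ x in Ioo (0:ℝ) 1, ∫⁻ y in Ioo (0:ℝ) 1, F1 ε (1-y) (1-x) :=
          lint_swap (fun x y => F1 ε (1-y) (1-x)) hG2m
      _ = _ := e2
  have hdb := F1_double (⟨he0, he2⟩ : ε ∈ Ioo (0:ℝ) (1/2))
  have hr : (0:ℝ) ≤ 64 / (-Real.log ε) := div_nonneg (by norm_num) hL.le
  calc gagSq (uEps ε) ≤ _ := step1
    _ = (∫⁻ x in Ioo (0:ℝ) 1, ∫⁻ y in Ioo (0:ℝ) 1, F1 ε x y)
        + (∫⁻ x in Ioo (0:ℝ) 1, ∫⁻ y in Ioo (0:ℝ) 1, F1 ε x y)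
        + (∫⁻ x in Ioo (0:ℝ) 1, ∫⁻ y in Ioo (0:ℝ) 1, F1 ε x y)
        + (∫⁻ x in Ioo (0:ℝ) 1, ∫⁻ y in Ioo (0:ℝ) 1, F1 ε x y) := by rw [e2, e3, e4]
    _ ≤ ENNReal.ofReal (64 / (-Real.log ε)) + ENNReal.ofReal (64 / (-Real.log ε))
        + ENNReal.ofReal (64 / (-Real.log ε)) + ENNReal.ofReal (64 / (-Real.log ε)) := by
        gcongr
    _ = ENNReal.ofReal (256 / |Real.log ε|) := by
        rw [hlabs, ← ENNReal.ofReal_add hr hr, ← ENNReal.ofReal_add (by linarith) hr,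
          ← ENNReal.ofReal_add (by linarith) hr]
        congr 1
        ring
end

section
/- Let s = 1/2 and p = 2. Then there exists a constant c > 0 such that for all sufficiently small ε ∈ (0,1/2), [u_ε]_{1/2,2,(0,1)}^2 = ∫_0^1 ∫_0^1 |u_ε(x) - u_ε(y)|^2 / |x-y|^2 dx dy ≥ c / |log ε|. In particular, combined with the matching upper bound, [u_ε]_{1/2,2,(0,1)}^2 is comparable to 1/|log ε| as ε → 0+. -/
open MeasureTheory Set Filter Topology
open scoped ENNReal

set_option maxHeartbeats 1000000 in
/-- Lower bound: for all sufficiently small `ε ∈ (0,1/2)`,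
`[u_ε]_{1/2,2,(0,1)}^2 ≥ c / |log ε|`. -/
theorem uEps_gagliardo_sq_lower_bound :
    ∃ c > 0, ∀ᶠ ε in 𝓝[>] (0 : ℝ), ε ∈ Ioo (0 : ℝ) (1 / 2) ∧
      ENNReal.ofReal (c / |Real.log ε|) ≤ gagSq (uEps ε) := by
  refine ⟨1/128, by norm_num, ?_⟩
  filter_upwards [Ioo_mem_nhdsGT_of_mem
    (show (0:ℝ) ∈ Ico (0:ℝ) (1/4) by constructor <;> norm_num)] with ε hεmem
  obtain ⟨hε0, hε4⟩ := hεmem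
  refine ⟨⟨hε0, by linarith⟩, ?_⟩
  set L : ℝ := -Real.log ε with hLdef
  have hlogneg : Real.log ε < 0 := Real.log_neg hε0 (by linarith)
  have habs : |Real.log ε| = L := abs_of_neg hlogneg
  have hlog2 : (0:ℝ) < Real.log 2 := Real.log_pos (by norm_num)
  have hL2 : 2 * Real.log 2 ≤ L := by
    have h4 : Real.log ε < Real.log (1/4) := Real.log_lt_log hε0 hε4
    have h4' : Real.log (1/4 : ℝ) = -(2 * Real.log 2) := by
      rw [show (1/4:ℝ) = (2^2:ℝ)⁻¹ by norm_num, Real.log_inv, Real.log_pow]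
      push_cast; ring
    rw [h4'] at h4; rw [hLdef]; linarith
  have hL0 : (0:ℝ) < L := by linarith
  set a : ℝ := ε^2 with hadef
  set b : ℝ := ε/2 with hbdef
  have ha0 : 0 < a := by positivity
  have hab : a < b := by
    rw [hadef, hbdef]; nlinarith
  -- pointwise lower bound for the integrand on the region
  have key : ∀ x ∈ Ioo a b, ∀ y ∈ Ioo x (2*x),
      1/(64*L^2*x^2) ≤ |uEps ε x - uEps ε y|^2 / |x - y|^2 := by
    rintro x ⟨hax, hxb⟩ y ⟨hxy, hy2x⟩
    have hx0 : 0 < x := ha0.trans hax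
    have hy0 : 0 < y := hx0.trans hxy
    have hxε : x < ε := by rw [hbdef] at hxb; linarith
    have hyε : y < ε := by rw [hbdef] at hxb; linarith
    set Lx : ℝ := -Real.log x with hLxdef
    set Ly : ℝ := -Real.log y with hLydef
    have hux : uEps ε x = L / Lx := by
      simp only [uEps, if_pos hxε, habs, hLxdef]
      rw [abs_of_neg (Real.log_neg hx0 (by linarith))]
    have huy : uEps ε y = L / Ly := by
      simp only [uEps, if_pos hyε, habs, hLydef]
      rw [abs_of_neg (Real.log_neg hy0 (by linarith))]
    have hLx2 : Lx < 2*L := by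
      have h1 : Real.log a < Real.log x := Real.log_lt_log ha0 hax
      have h2 : Real.log a = 2 * Real.log ε := by
        rw [hadef, Real.log_pow]; push_cast; ring
      rw [hLxdef, hLdef]; linarith
    have hLyL : L < Ly := by
      have := Real.log_lt_log hy0 hyε
      rw [hLydef, hLdef]; linarith
    have hLxLy : Ly ≤ Lx := by
      have := Real.log_lt_log hx0 hxy
      rw [hLydef, hLxdef]; linarith
    have hLy0 : 0 < Ly := hL0.trans hLyL
    have hLx0 : 0 < Lx := hLy0.trans_le hLxLy
    have hLy2 : Ly < 2*L := lt_of_le_of_lt hLxLy hLx2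
    -- log y - log x ≥ (y-x)/y
    have hlog : (y - x)/y ≤ Lx - Ly := by
      have h1 : Real.log (x/y) ≤ x/y - 1 := Real.log_le_sub_one_of_pos (by positivity)
      rw [Real.log_div hx0.ne' hy0.ne'] at h1
      have h2 : x/y - 1 = (x - y)/y := by field_simp
      rw [h2] at h1
      have h3 : (y-x)/y = -((x-y)/y) := by ring
      rw [h3, hLxdef, hLydef]; linarith
    have hdiff : (y - x)/(8*L*x) ≤ uEps ε y - uEps ε x := by
      rw [hux, huy]
      have e1 : L/Ly - L/Lx = L * (Lx - Ly) / (Lx * Ly) := by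
        field_simp
      rw [e1]
      have step1 : L * ((y - x)/y) / (4*L^2) ≤ L * (Lx - Ly) / (Lx * Ly) := by
        apply div_le_div₀ (mul_nonneg hL0.le (by linarith))
          (mul_le_mul_of_nonneg_left hlog hL0.le) (by positivity)
        nlinarith
      have step0 : (y - x)/(8*L*x) ≤ L * ((y - x)/y) / (4*L^2) := by
        have e2 : L * ((y - x)/y) / (4*L^2) = (y - x)/(4*L*y) := by
          field_simp
        rw [e2]
        exact div_le_div_of_nonneg_left (by linarith) (by positivity)
          (by nlinarith [mul_le_mul_of_nonneg_left hy2x.le (by positivity : (0:ℝ) ≤ 4*L)])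
      linarith
    -- conclude
    have hd0 : (0:ℝ) ≤ (y - x)/(8*L*x) := div_nonneg (by linarith) (by positivity)
    have habs1 : |uEps ε x - uEps ε y| = uEps ε y - uEps ε x := by
      rw [abs_sub_comm]; exact abs_of_nonneg (by linarith)
    have habs2 : |x - y| = y - x := by
      rw [abs_sub_comm]; exact abs_of_nonneg (by linarith)
    rw [habs1, habs2]
    have hsq : ((y - x)/(8*L*x))^2 ≤ (uEps ε y - uEps ε x)^2 :=
      pow_le_pow_left₀ hd0 hdiff 2
    have e3 : ((y - x)/(8*L*x))^2 / (y - x)^2 = 1/(64*L^2*x^2) := by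
      have hyx : y - x ≠ 0 := sub_ne_zero_of_ne hxy.ne'
      field_simp; ring
    rw [← e3]
    exact div_le_div_of_nonneg_right hsq (by positivity) |>.trans_eq rfl
  -- inner integral lower bound
  have hbε : b < ε := by rw [hbdef]; linarith
  have stepA : ∀ x ∈ Ioo a b,
      ENNReal.ofReal (1/(64*L^2*x)) ≤
        ∫⁻ y in Ioo (0:ℝ) 1, ENNReal.ofReal (|uEps ε x - uEps ε y|^2 / |x - y|^2) := by
    intro x hx
    obtain ⟨hax, hxb⟩ := hx
    have hx0 : 0 < x := ha0.trans hax
    have hsub : Ioo x (2*x) ⊆ Ioo (0:ℝ) 1 := by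
      rintro y ⟨h1, h2⟩
      exact ⟨hx0.trans h1, by linarith [hbε, hε4]⟩
    calc ENNReal.ofReal (1/(64*L^2*x))
        = ENNReal.ofReal (1/(64*L^2*x^2)) * volume (Ioo x (2*x)) := by
          rw [Real.volume_Ioo, ← ENNReal.ofReal_mul (by positivity)]
          congr 1
          field_simp; ring
      _ = ∫⁻ _ in Ioo x (2*x), ENNReal.ofReal (1/(64*L^2*x^2)) := by
          rw [setLIntegral_const]
      _ ≤ ∫⁻ y in Ioo x (2*x), ENNReal.ofReal (|uEps ε x - uEps ε y|^2 / |x - y|^2) := by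
          exact setLIntegral_mono' measurableSet_Ioo
            (fun y hy => ENNReal.ofReal_le_ofReal (key x ⟨hax, hxb⟩ y hy))
      _ ≤ ∫⁻ y in Ioo (0:ℝ) 1, ENNReal.ofReal (|uEps ε x - uEps ε y|^2 / |x - y|^2) :=
          lintegral_mono_set hsub
  -- integrability and value of the outer integral
  have hint : IntegrableOn (fun x : ℝ => 1/(64*L^2*x)) (Ioo a b) := by
    apply (ContinuousOn.integrableOn_Icc ?_).mono_set Ioo_subset_Icc_self
    apply ContinuousOn.div continuousOn_const (by fun_prop)
    intro x hx
    have hx0 : (0:ℝ) < x := lt_of_lt_of_le ha0 hx.1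
    positivity
  have hnn : 0 ≤ᵐ[volume.restrict (Ioo a b)] fun x : ℝ => 1/(64*L^2*x) := by
    filter_upwards [self_mem_ae_restrict measurableSet_Ioo] with x hx
    have hx0 : 0 < x := ha0.trans hx.1
    positivity
  have hval : ∫ x in Ioo a b, 1/(64*L^2*x) = (1/(64*L^2)) * Real.log (b/a) := by
    rw [← integral_Ioc_eq_integral_Ioo, ← intervalIntegral.integral_of_le hab.le]
    have hrw : ∀ x : ℝ, 1/(64*L^2*x) = (1/(64*L^2))*(1/x) := fun x =>
      (one_div_mul_one_div _ _).symm
    simp_rw [hrw]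
    rw [intervalIntegral.integral_const_mul, integral_one_div]
    intro h
    rw [Set.uIcc_of_le hab.le] at h
    exact absurd h.1 (by linarith)
  have hlogba : Real.log (b/a) = L - Real.log 2 := by
    have e : b/a = (2*ε)⁻¹ := by
      rw [hbdef, hadef]; field_simp
    rw [e, Real.log_inv, Real.log_mul two_ne_zero hε0.ne', hLdef]; ring
  have hfinal : (1/128 : ℝ)/|Real.log ε| ≤ ∫ x in Ioo a b, 1/(64*L^2*x) := by
    rw [habs, hval, hlogba]
    rw [div_le_iff₀ hL0]
    have h1 : (1/(64*L^2)) * (L - Real.log 2) * L = (L - Real.log 2)/(64*L) := by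
      field_simp
    rw [h1, le_div_iff₀ (by positivity)]
    nlinarith
  calc ENNReal.ofReal ((1/128 : ℝ)/|Real.log ε|)
      ≤ ENNReal.ofReal (∫ x in Ioo a b, 1/(64*L^2*x)) := ENNReal.ofReal_le_ofReal hfinal
    _ = ∫⁻ x in Ioo a b, ENNReal.ofReal (1/(64*L^2*x)) :=
        ofReal_integral_eq_lintegral_ofReal hint hnn
    _ ≤ ∫⁻ x in Ioo a b, ∫⁻ y in Ioo (0:ℝ) 1,
          ENNReal.ofReal (|uEps ε x - uEps ε y|^2 / |x - y|^2) :=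
        setLIntegral_mono' measurableSet_Ioo stepA
    _ ≤ ∫⁻ x in Ioo (0:ℝ) 1, ∫⁻ y in Ioo (0:ℝ) 1,
          ENNReal.ofReal (|uEps ε x - uEps ε y|^2 / |x - y|^2) :=
        lintegral_mono_set (fun x hx => ⟨ha0.trans hx.1, by
          have := hx.2; rw [hbdef] at this; linarith⟩)
    _ = gagSq (uEps ε) := rfl
end

section
/- There exists a constant C > 0 such that for every ε ∈ (0,1/2), ∫_0^ε ∫_ε^{1-ε} (|log ε|/|log x| - 1)^2 / (x - y)^2 dy dx ≤ C / (log ε)^2. In fact this double integral is bounded by (1/(log ε)^2) ∫_0^∞ t^2/(e^t - 1) dt, and the latter integral is finite. -/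
open MeasureTheory Set Filter Topology
open scoped ENNReal

private lemma aux_exp_sub_one_pos {t : ℝ} (ht : 0 < t) : 0 < Real.exp t - 1 := by
  nlinarith [Real.add_one_le_exp t]

private lemma aux_integrable : IntegrableOn (fun t : ℝ => t ^ 2 / (Real.exp t - 1)) (Ioi 0) := by
  have hmeas : Measurable fun t : ℝ => t ^ 2 / (Real.exp t - 1) :=
    (measurable_id.pow_const 2).div (Real.measurable_exp.sub measurable_const)
  rw [show Ioi (0:ℝ) = Ioc 0 1 ∪ Ioi 1 from (Ioc_union_Ioi_eq_Ioi zero_le_one).symm]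
  refine IntegrableOn.union ?_ ?_
  · refine Measure.integrableOn_of_bounded (M := 1) ?_ hmeas.aestronglyMeasurable ?_
    · simp [Real.volume_Ioc]
    · filter_upwards [ae_restrict_mem measurableSet_Ioc] with t ht
      have h1 : (0:ℝ) < Real.exp t - 1 := aux_exp_sub_one_pos ht.1
      rw [Real.norm_eq_abs, abs_of_nonneg (by positivity), div_le_one h1]
      nlinarith [Real.add_one_le_exp t, ht.1, ht.2]
  · have hg : IntegrableOn (fun t : ℝ => 2 * (Real.exp (-t) * t ^ ((3:ℝ) - 1))) (Ioi 1) :=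
      ((Real.GammaIntegral_convergent (by norm_num : (0:ℝ) < 3)).mono_set
        (Ioi_subset_Ioi zero_le_one)).const_mul 2
    refine Integrable.mono' hg hmeas.aestronglyMeasurable ?_
    filter_upwards [ae_restrict_mem measurableSet_Ioi] with t ht
    have ht1 : (1:ℝ) < t := ht
    have hE : (2:ℝ) ≤ Real.exp t := by
      have h1 := Real.add_one_le_exp 1
      have h2 : Real.exp 1 ≤ Real.exp t := Real.exp_le_exp.2 ht1.le
      linarith
    have h1 : (0:ℝ) < Real.exp t - 1 := by linarith
    rw [Real.norm_eq_abs, abs_of_nonneg (by positivity)]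
    have h2 : ((3:ℝ) - 1) = ((2:ℕ) : ℝ) := by norm_num
    rw [h2, Real.rpow_natCast, Real.exp_neg, div_le_iff₀ h1]
    have hEne : Real.exp t ≠ 0 := (Real.exp_pos t).ne'
    have hinv : (Real.exp t)⁻¹ * Real.exp t = 1 := inv_mul_cancel₀ hEne
    have h2v : 2 * (Real.exp t)⁻¹ ≤ 1 := by
      have := mul_le_mul_of_nonneg_right hE (inv_nonneg.2 (Real.exp_pos t).le)
      rw [mul_comm (Real.exp t) (Real.exp t)⁻¹] at this
      rw [hinv] at this
      linarith
    have key : (Real.exp t)⁻¹ * Real.exp t * t ^ 2 = t ^ 2 := by rw [hinv]; ring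
    nlinarith [key, mul_nonneg (sq_nonneg t) (by linarith : (0:ℝ) ≤ 1 - 2 * (Real.exp t)⁻¹)]

/-- The cross term `∫_0^ε ∫_ε^{1-ε} (|log ε|/|log x| - 1)²/(x-y)² dy dx` is bounded by
`(1/(log ε)²) ∫_0^∞ t²/(eᵗ-1) dt`, which is finite; in particular it is `≤ C/(log ε)²`. -/
theorem cross_term_bound :
    IntegrableOn (fun t : ℝ => t ^ 2 / (Real.exp t - 1)) (Ioi 0) ∧
    (∀ ε ∈ Ioo (0 : ℝ) (1 / 2),
      (∫⁻ x in Ioo (0 : ℝ) ε, ∫⁻ y in Ioo ε (1 - ε),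
          ENNReal.ofReal ((|Real.log ε| / |Real.log x| - 1) ^ 2 / (x - y) ^ 2))
        ≤ ENNReal.ofReal
            ((1 / (Real.log ε) ^ 2) * ∫ t in Ioi (0 : ℝ), t ^ 2 / (Real.exp t - 1))) ∧
    ∃ C > 0, ∀ ε ∈ Ioo (0 : ℝ) (1 / 2),
      (∫⁻ x in Ioo (0 : ℝ) ε, ∫⁻ y in Ioo ε (1 - ε),
          ENNReal.ofReal ((|Real.log ε| / |Real.log x| - 1) ^ 2 / (x - y) ^ 2))
        ≤ ENNReal.ofReal (C / (Real.log ε) ^ 2) := by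
  have hI := aux_integrable
  -- the main estimate
  have key : ∀ ε ∈ Ioo (0 : ℝ) (1 / 2),
      (∫⁻ x in Ioo (0 : ℝ) ε, ∫⁻ y in Ioo ε (1 - ε),
          ENNReal.ofReal ((|Real.log ε| / |Real.log x| - 1) ^ 2 / (x - y) ^ 2))
        ≤ ENNReal.ofReal
            ((1 / (Real.log ε) ^ 2) * ∫ t in Ioi (0 : ℝ), t ^ 2 / (Real.exp t - 1)) := by
    rintro ε ⟨hε0, hε2⟩
    have hε1 : ε < 1 := by linarith
    have hεne : ε ≠ 0 := ne_of_gt hε0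
    have hL : Real.log ε < 0 := Real.log_neg hε0 hε1
    have hLne : Real.log ε ≠ 0 := ne_of_lt hL
    set L := Real.log ε with hLdef
    set H : ℝ → ℝ := fun x => (L - Real.log x) ^ 2 / L ^ 2 * (ε - x)⁻¹ with hHdef
    -- inner integral bound
    have inner_bound : ∀ x ∈ Ioo (0:ℝ) ε,
        (∫⁻ y in Ioo ε (1 - ε),
          ENNReal.ofReal ((|L| / |Real.log x| - 1) ^ 2 / (x - y) ^ 2))
          ≤ ENNReal.ofReal (H x) := by
      rintro x ⟨hx0, hxε⟩
      have hxL : Real.log x < L := Real.log_lt_log hx0 hxε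
      have hLx : Real.log x < 0 := lt_trans hxL hL
      have hLxne : Real.log x ≠ 0 := ne_of_lt hLx
      have hd : (0:ℝ) < ε - x := by linarith
      have ha : (|L| / |Real.log x| - 1) ^ 2 = (L - Real.log x) ^ 2 / (Real.log x) ^ 2 := by
        rw [abs_of_neg hL, abs_of_neg hLx]
        field_simp
      have hderiv : ∀ y ∈ Ici ε, HasDerivAt (fun y : ℝ => -(y - x)⁻¹) (((y - x) ^ 2)⁻¹) y := by
        intro y hy
        have hyx : y - x ≠ 0 := by
          have : ε ≤ y := hy
          have : 0 < y - x := by linarith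
          exact ne_of_gt this
        have h1 : HasDerivAt (fun y : ℝ => y - x) 1 y := (hasDerivAt_id y).sub_const x
        have h2 := (h1.inv hyx).neg
        rw [show ((y - x) ^ 2)⁻¹ = -(-1 / (y - x) ^ 2) by ring]
        exact h2
      have htend : Tendsto (fun y : ℝ => -(y - x)⁻¹) atTop (𝓝 0) := by
        have h1 : Tendsto (fun y : ℝ => y - x) atTop atTop := by
          simpa [sub_eq_add_neg] using tendsto_atTop_add_const_right atTop (-x) tendsto_id
        have := (tendsto_inv_atTop_zero.comp h1).neg
        simpa using this
      have hpos : ∀ y ∈ Ioi ε, (0:ℝ) ≤ ((y - x) ^ 2)⁻¹ := fun y _ => by positivity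
      have hint : IntegrableOn (fun y : ℝ => ((y - x) ^ 2)⁻¹) (Ioi ε) :=
        integrableOn_Ioi_deriv_of_nonneg' hderiv hpos htend
      have hval : ∫ y in Ioi ε, ((y - x) ^ 2)⁻¹ = (ε - x)⁻¹ := by
        rw [integral_Ioi_of_hasDerivAt_of_nonneg' hderiv hpos htend]
        simp
      have hnn : 0 ≤ᵐ[volume.restrict (Ioi ε)] fun y : ℝ => ((y - x) ^ 2)⁻¹ :=
        Eventually.of_forall fun y => by positivity
      calc (∫⁻ y in Ioo ε (1 - ε),
              ENNReal.ofReal ((|L| / |Real.log x| - 1) ^ 2 / (x - y) ^ 2))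
          = ∫⁻ y in Ioo ε (1 - ε),
              ENNReal.ofReal ((|L| / |Real.log x| - 1) ^ 2) *
                ENNReal.ofReal (((y - x) ^ 2)⁻¹) := by
            apply lintegral_congr
            intro y
            rw [show (x - y) ^ 2 = (y - x) ^ 2 by ring, div_eq_mul_inv,
              ENNReal.ofReal_mul (sq_nonneg _)]
        _ = ENNReal.ofReal ((|L| / |Real.log x| - 1) ^ 2) *
              ∫⁻ y in Ioo ε (1 - ε), ENNReal.ofReal (((y - x) ^ 2)⁻¹) :=
            lintegral_const_mul' _ _ ENNReal.ofReal_ne_top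
        _ ≤ ENNReal.ofReal ((|L| / |Real.log x| - 1) ^ 2) *
              ∫⁻ y in Ioi ε, ENNReal.ofReal (((y - x) ^ 2)⁻¹) :=
            mul_le_mul_right (lintegral_mono_set fun y hy => hy.1) _
        _ = ENNReal.ofReal ((|L| / |Real.log x| - 1) ^ 2) * ENNReal.ofReal ((ε - x)⁻¹) := by
            rw [← ofReal_integral_eq_lintegral_ofReal hint hnn, hval]
        _ = ENNReal.ofReal ((|L| / |Real.log x| - 1) ^ 2 * (ε - x)⁻¹) :=
            (ENNReal.ofReal_mul (sq_nonneg _)).symm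
        _ ≤ ENNReal.ofReal (H x) := by
            apply ENNReal.ofReal_le_ofReal
            apply mul_le_mul_of_nonneg_right _ (inv_nonneg.2 hd.le)
            rw [ha]
            have hsq : L ^ 2 ≤ (Real.log x) ^ 2 := by nlinarith
            exact div_le_div_of_nonneg_left (sq_nonneg _) (by positivity) hsq
    -- change of variables for the outer integral
    set φ : ℝ → ℝ := fun t => ε * Real.exp (-t) with hφdef
    set φ' : ℝ → ℝ := fun t => ε * (Real.exp (-t) * (-1)) with hφ'def
    have himg : φ '' Ioi 0 = Ioo 0 ε := by
      ext x
      constructor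
      · rintro ⟨t, ht, rfl⟩
        have ht0 : (0:ℝ) < t := ht
        have he1 : Real.exp (-t) < 1 := by
          rw [Real.exp_lt_one_iff]
          linarith
        constructor
        · have : 0 < Real.exp (-t) := Real.exp_pos _
          simp only [hφdef]
          positivity
        · simp only [hφdef]
          calc ε * Real.exp (-t) < ε * 1 := by
                exact mul_lt_mul_of_pos_left he1 hε0
            _ = ε := mul_one ε
      · rintro ⟨hx0, hxε⟩
        refine ⟨Real.log ε - Real.log x, sub_pos.2 (Real.log_lt_log hx0 hxε), ?_⟩
        simp only [hφdef]
        rw [neg_sub, Real.exp_sub, Real.exp_log hx0, Real.exp_log hε0]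
        field_simp
    have hder : ∀ t ∈ Ioi (0:ℝ), HasDerivWithinAt φ (φ' t) (Ioi 0) t := fun t _ =>
      (HasDerivAt.const_mul ε (hasDerivAt_neg t).exp).hasDerivWithinAt
    have hinj : InjOn φ (Ioi 0) := by
      intro a _ b _ h
      simp only [hφdef] at h
      have h2 := mul_left_cancel₀ hεne h
      have h3 := Real.exp_injective h2
      linarith [neg_injective h3]
    have habs : ∀ t : ℝ, |φ' t| = ε * Real.exp (-t) := by
      intro t
      simp only [hφ'def]
      rw [mul_neg_one, mul_neg, abs_neg, abs_of_nonneg (by positivity)]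
    have hcomp : EqOn (fun t => |φ' t| • H (φ t))
        (fun t => (1 / L ^ 2) * (t ^ 2 / (Real.exp t - 1))) (Ioi 0) := by
      intro t ht
      have ht0 : (0:ℝ) < t := ht
      have hu : (1:ℝ) < Real.exp t := by
        have := Real.add_one_le_exp t
        linarith
      have hu0 : Real.exp t ≠ 0 := (Real.exp_pos t).ne'
      have hu1 : Real.exp t - 1 ≠ 0 := ne_of_gt (by linarith)
      have hlog : Real.log (ε * Real.exp (-t)) = L + (-t) := by
        rw [Real.log_mul hεne (Real.exp_ne_zero _), Real.log_exp, hLdef]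
      simp only [smul_eq_mul, hHdef, hφdef]
      rw [habs t, hlog]
      have h2 : L - (L + -t) = t := by ring
      rw [h2, Real.exp_neg]
      have h3 : ε - ε * (Real.exp t)⁻¹ = ε * (Real.exp t - 1) / Real.exp t := by
        field_simp
      rw [h3]
      field_simp
    have hHint : IntegrableOn H (Ioo 0 ε) := by
      rw [← himg,
        integrableOn_image_iff_integrableOn_abs_deriv_smul measurableSet_Ioi hder hinj]
      exact IntegrableOn.congr_fun (hI.const_mul (1 / L ^ 2)) hcomp.symm measurableSet_Ioi
    have hHval : ∫ x in Ioo 0 ε, H x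
        = (1 / L ^ 2) * ∫ t in Ioi (0:ℝ), t ^ 2 / (Real.exp t - 1) := by
      rw [← himg, integral_image_eq_integral_abs_deriv_smul measurableSet_Ioi hder hinj,
        setIntegral_congr_fun measurableSet_Ioi hcomp, integral_const_mul]
    have hHnn : 0 ≤ᵐ[volume.restrict (Ioo (0:ℝ) ε)] H := by
      filter_upwards [ae_restrict_mem measurableSet_Ioo] with x hx
      have : (0:ℝ) < ε - x := by linarith [hx.2]
      simp only [hHdef]
      positivity
    calc (∫⁻ x in Ioo (0 : ℝ) ε, ∫⁻ y in Ioo ε (1 - ε),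
            ENNReal.ofReal ((|L| / |Real.log x| - 1) ^ 2 / (x - y) ^ 2))
        ≤ ∫⁻ x in Ioo (0 : ℝ) ε, ENNReal.ofReal (H x) := by
          apply lintegral_mono_ae
          filter_upwards [ae_restrict_mem measurableSet_Ioo] with x hx
          exact inner_bound x hx
      _ = ENNReal.ofReal (∫ x in Ioo (0:ℝ) ε, H x) :=
          (ofReal_integral_eq_lintegral_ofReal hHint hHnn).symm
      _ = ENNReal.ofReal ((1 / L ^ 2) * ∫ t in Ioi (0:ℝ), t ^ 2 / (Real.exp t - 1)) := by
          rw [hHval]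
  refine ⟨hI, key, ?_⟩
  have hIv : 0 ≤ ∫ t in Ioi (0:ℝ), t ^ 2 / (Real.exp t - 1) := by
    apply setIntegral_nonneg measurableSet_Ioi
    intro t ht
    have := aux_exp_sub_one_pos ht
    positivity
  refine ⟨(∫ t in Ioi (0:ℝ), t ^ 2 / (Real.exp t - 1)) + 1, by linarith, fun ε hε => ?_⟩
  refine (key ε hε).trans (ENNReal.ofReal_le_ofReal ?_)
  have hL : Real.log ε < 0 := Real.log_neg hε.1 (by linarith [hε.2])
  have hLne : Real.log ε ≠ 0 := ne_of_lt hL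
  have hL2 : 0 < (Real.log ε) ^ 2 := by positivity
  rw [one_div, ← div_eq_inv_mul]
  gcongr
  linarith
end
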